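/- arXiv:2210.13377 — 3 statements merged into one kernel-verified Lean document; each statement's English description precedes it below -/
import Mathlib

section
/- Let 1 ≤ p < ∞, let I and J be compact intervals with |I| = 1 and |J| = ℓ ≤ 1, and let R = I × J. Then for every smooth function G on R and every λ, h > 0, sup_{(t,s) ∈ R} |G(t,s)| ≤ C·[ (1 + λ^{1/p})(ℓ^{−1/p} + h^{1/p})·‖G‖_{L^p(R)} + (ℓ^{−1/p} + h^{1/p})·λ^{−1/p'}·‖∂_t G‖_{L^p(R)} + (1 + λ^{1/p})·h^{−1/p'}·‖∂_s G‖_{L^p(R)} + λ^{−1/p'}·h^{−1/p'}·‖∂_t ∂_s G‖_{L^p(R)} ] for an absolute constant C, where 1/p + 1/p' = 1. -/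
open MeasureTheory Set
open scoped ENNReal

lemma oneD_real {F F' : ℝ → ℂ} {α β t u : ℝ} (hαβ : α ≤ β) (ht : t ∈ Icc α β)
    (hd : ∀ x ∈ Icc α β, HasDerivWithinAt F (F' x) (Icc α β) x)
    (hc' : ContinuousOn F' (Icc α β)) (hu : u ∈ Icc α β) :
    ‖F t‖ ≤ ‖F u‖ + ∫ x in α..β, ‖F' x‖ := by
  have hFc : ContinuousOn F (Icc α β) := fun x hx => (hd x hx).continuousWithinAt
  have hsub : uIcc u t ⊆ Icc α β := uIcc_subset_Icc hu ht
  have hderiv : ∀ x ∈ Ioo (min u t) (max u t), HasDerivWithinAt F (F' x) (Ioi x) x := by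
    intro x hx
    have hx1 : x ∈ Ioo α β := by
      constructor
      · exact lt_of_le_of_lt (le_min hu.1 ht.1) hx.1
      · exact lt_of_lt_of_le hx.2 (max_le hu.2 ht.2)
    have : HasDerivAt F (F' x) x :=
      (hd x (Ioo_subset_Icc_self hx1)).hasDerivAt (Icc_mem_nhds hx1.1 hx1.2)
    exact this.hasDerivWithinAt
  have key : ∫ x in u..t, F' x = F t - F u :=
    intervalIntegral.integral_eq_sub_of_hasDeriv_right (hFc.mono hsub) hderiv
      ((hc'.mono hsub).intervalIntegrable)
  have hnn : 0 ≤ᵐ[volume.restrict (Ioc α β)] fun x => ‖F' x‖ :=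
    Filter.Eventually.of_forall fun x => norm_nonneg _
  have hint : IntervalIntegrable (fun x => ‖F' x‖) volume α β :=
    (hc'.norm).intervalIntegrable_of_Icc hαβ
  have h1 : ‖F t‖ - ‖F u‖ ≤ ‖F t - F u‖ := norm_sub_norm_le _ _
  have h2 : ‖∫ x in u..t, F' x‖ ≤ |∫ x in u..t, ‖F' x‖| :=
    intervalIntegral.norm_integral_le_abs_integral_norm
  have h3 : |∫ x in u..t, ‖F' x‖| ≤ ∫ x in α..β, ‖F' x‖ := by
    rcases le_total u t with hut | htu
    · rw [abs_of_nonneg (intervalIntegral.integral_nonneg hut fun x _ => norm_nonneg _)]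
      exact intervalIntegral.integral_mono_interval hu.1 hut ht.2 hnn hint
    · rw [intervalIntegral.integral_symm, abs_neg,
        abs_of_nonneg (intervalIntegral.integral_nonneg htu fun x _ => norm_nonneg _)]
      exact intervalIntegral.integral_mono_interval ht.1 htu hu.2 hnn hint
  have h4 : ‖F t - F u‖ ≤ ∫ x in α..β, ‖F' x‖ := by
    rw [← key]; exact h2.trans h3
  have := h1.trans h4
  linarith

lemma ofReal_intervalIntegral_norm {F' : ℝ → ℂ} {α β : ℝ} (hαβ : α ≤ β)
    (hc' : ContinuousOn F' (Icc α β)) :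
    ENNReal.ofReal (∫ x in α..β, ‖F' x‖) = ∫⁻ x in Icc α β, (‖F' x‖₊ : ℝ≥0∞) := by
  rw [intervalIntegral.integral_of_le hαβ]
  rw [MeasureTheory.ofReal_integral_eq_lintegral_ofReal
    ((hc'.norm.integrableOn_Icc).mono_set Ioc_subset_Icc_self)
    (Filter.Eventually.of_forall fun x => norm_nonneg _)]
  rw [Measure.restrict_congr_set Ioc_ae_eq_Icc]
  refine lintegral_congr fun x => ?_
  exact ofReal_norm (F' x)

lemma oneD' {F F' : ℝ → ℂ} {α β t : ℝ} (hαβ : α ≤ β) (ht : t ∈ Icc α β)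
    (hd : ∀ x ∈ Icc α β, HasDerivWithinAt F (F' x) (Icc α β) x)
    (hc' : ContinuousOn F' (Icc α β)) :
    ENNReal.ofReal (β - α) * (‖F t‖₊ : ℝ≥0∞) ≤
      (∫⁻ x in Icc α β, (‖F x‖₊ : ℝ≥0∞)) + ENNReal.ofReal (β - α) * ∫⁻ x in Icc α β, (‖F' x‖₊ : ℝ≥0∞) := by
  have hK : ENNReal.ofReal (∫ x in α..β, ‖F' x‖) = ∫⁻ x in Icc α β, (‖F' x‖₊ : ℝ≥0∞) :=
    ofReal_intervalIntegral_norm hαβ hc'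
  have hpt : ∀ u ∈ Icc α β, (‖F t‖₊ : ℝ≥0∞) ≤ (‖F u‖₊ : ℝ≥0∞) + ∫⁻ x in Icc α β, (‖F' x‖₊ : ℝ≥0∞) := by
    intro u hu
    have := oneD_real hαβ ht hd hc' hu
    calc (‖F t‖₊ : ℝ≥0∞) = ENNReal.ofReal ‖F t‖ := (ofReal_norm _).symm
      _ ≤ ENNReal.ofReal (‖F u‖ + ∫ x in α..β, ‖F' x‖) := ENNReal.ofReal_le_ofReal this
      _ ≤ ENNReal.ofReal ‖F u‖ + ENNReal.ofReal (∫ x in α..β, ‖F' x‖) :=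
        ENNReal.ofReal_add_le
      _ = (‖F u‖₊ : ℝ≥0∞) + ∫⁻ x in Icc α β, (‖F' x‖₊ : ℝ≥0∞) := by rw [ofReal_norm, enorm_eq_nnnorm, hK]
  calc ENNReal.ofReal (β - α) * (‖F t‖₊ : ℝ≥0∞) = ∫⁻ _ in Icc α β, (‖F t‖₊ : ℝ≥0∞) := by
        rw [MeasureTheory.setLIntegral_const, Real.volume_Icc, mul_comm]
    _ ≤ ∫⁻ u in Icc α β, ((‖F u‖₊ : ℝ≥0∞) + ∫⁻ x in Icc α β, (‖F' x‖₊ : ℝ≥0∞)) := by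
        refine lintegral_mono_ae ?_
        filter_upwards [self_mem_ae_restrict measurableSet_Icc] with u hu
        exact hpt u hu
    _ = (∫⁻ x in Icc α β, (‖F x‖₊ : ℝ≥0∞)) + ∫⁻ _ in Icc α β, (∫⁻ x in Icc α β, (‖F' x‖₊ : ℝ≥0∞)) := by
        rw [lintegral_add_right']
        exact aemeasurable_const
    _ = (∫⁻ x in Icc α β, (‖F x‖₊ : ℝ≥0∞)) + ENNReal.ofReal (β - α) * ∫⁻ x in Icc α β, (‖F' x‖₊ : ℝ≥0∞) := by
        rw [MeasureTheory.setLIntegral_const, Real.volume_Icc, mul_comm]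

lemma slice_fst {G : ℝ × ℝ → ℂ} {I J : Set ℝ} (hG : DifferentiableOn ℝ G (I ×ˢ J))
    {u s : ℝ} (hu : u ∈ I) (hs : s ∈ J) :
    HasDerivWithinAt (fun x => G (x, s)) (fderivWithin ℝ G (I ×ˢ J) (u, s) (1, 0)) I u := by
  have h1 : HasFDerivWithinAt G (fderivWithin ℝ G (I ×ˢ J) (u, s)) (I ×ˢ J) (u, s) :=
    (hG (u, s) ⟨hu, hs⟩).hasFDerivWithinAt
  have h2 : HasDerivWithinAt (fun x : ℝ => ((x, s) : ℝ × ℝ)) ((1 : ℝ), (0 : ℝ)) I u :=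
    ((hasDerivAt_id u).prodMk (hasDerivAt_const u s)).hasDerivWithinAt
  exact h1.comp_hasDerivWithinAt u h2 fun x hx => (⟨hx, hs⟩ : (x, s) ∈ I ×ˢ J)

lemma slice_snd {G : ℝ × ℝ → ℂ} {I J : Set ℝ} (hG : DifferentiableOn ℝ G (I ×ˢ J))
    {u s : ℝ} (hu : u ∈ I) (hs : s ∈ J) :
    HasDerivWithinAt (fun y => G (u, y)) (fderivWithin ℝ G (I ×ˢ J) (u, s) (0, 1)) J s := by
  have h1 : HasFDerivWithinAt G (fderivWithin ℝ G (I ×ˢ J) (u, s)) (I ×ˢ J) (u, s) :=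
    (hG (u, s) ⟨hu, hs⟩).hasFDerivWithinAt
  have h2 : HasDerivWithinAt (fun y : ℝ => ((u, y) : ℝ × ℝ)) ((0 : ℝ), (1 : ℝ)) J s :=
    ((hasDerivAt_const s u).prodMk (hasDerivAt_id s)).hasDerivWithinAt
  exact h1.comp_hasDerivWithinAt s h2 fun y hy => (⟨hu, hy⟩ : (u, y) ∈ I ×ˢ J)

lemma rpow_inv_mul {x : ℝ} (hx : 0 < x) (e : ℝ) : x⁻¹ * x ^ e = x ^ (e - 1) := by
  rw [← Real.rpow_neg_one x, ← Real.rpow_add hx]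
  ring_nf

lemma rpow_self_mul {x : ℝ} (hx : 0 < x) (e : ℝ) : x * x ^ e = x ^ (e + 1) := by
  nth_rewrite 1 [← Real.rpow_one x]
  rw [← Real.rpow_add hx]
  ring_nf

lemma min_inv_bound {b x : ℝ} (hb : 0 < b) (hx : 0 < x) (r : ℝ) (hr : 0 ≤ r) :
    (min b x⁻¹) ^ (-r) ≤ (max b⁻¹ x) ^ r := by
  have hmax : 0 < max b⁻¹ x := lt_max_of_lt_left (inv_pos.mpr hb)
  have h1 : (max b⁻¹ x)⁻¹ ≤ min b x⁻¹ := by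
    refine le_min ?_ ?_
    · have := inv_anti₀ (inv_pos.mpr hb) (le_max_left b⁻¹ x)
      rwa [inv_inv] at this
    · exact inv_anti₀ hx (le_max_right _ _)
  have hmin : 0 < min b x⁻¹ := lt_min hb (inv_pos.mpr hx)
  have h2 : (min b x⁻¹)⁻¹ ≤ max b⁻¹ x := by
    have := inv_anti₀ (by positivity) h1
    rwa [inv_inv] at this
  calc (min b x⁻¹) ^ (-r) = ((min b x⁻¹)⁻¹) ^ r := by
        rw [Real.inv_rpow hmin.le, ← Real.rpow_neg hmin.le]
    _ ≤ (max b⁻¹ x) ^ r := Real.rpow_le_rpow (inv_nonneg.mpr hmin.le) h2 hr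

lemma max_rpow_le {u v : ℝ} (hu : 0 ≤ u) (hv : 0 ≤ v) (r : ℝ) :
    (max u v) ^ r ≤ u ^ r + v ^ r := by
  rcases max_cases u v with ⟨h1, _⟩ | ⟨h1, _⟩ <;> rw [h1]
  · exact le_add_of_nonneg_right (Real.rpow_nonneg hv r)
  · exact le_add_of_nonneg_left (Real.rpow_nonneg hu r)


/-- Two-parameter Sobolev-type inequality on a rectangle `R = I × J` with `|I| = 1`,
`|J| = ℓ ≤ 1`: for smooth `G` on `R`, `1 ≤ p < ∞` and any `λ, h > 0`,
`sup_R |G| ≤ C [ (1 + λ^{1/p})(ℓ^{-1/p} + h^{1/p}) ‖G‖_p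
  + (ℓ^{-1/p} + h^{1/p}) λ^{-1/p'} ‖∂_t G‖_p + (1 + λ^{1/p}) h^{-1/p'} ‖∂_s G‖_p
  + λ^{-1/p'} h^{-1/p'} ‖∂_t ∂_s G‖_p ]` for an absolute constant `C`. -/
theorem sup_le_lp_two_parameter_tradeoff :
    ∃ C : ℝ, 0 < C ∧ ∀ (p : ℝ), 1 ≤ p → ∀ (a c ℓ : ℝ), 0 < ℓ → ℓ ≤ 1 →
      ∀ G : ℝ × ℝ → ℂ, ContDiffOn ℝ (⊤ : ℕ∞) G (Icc a (a + 1) ×ˢ Icc c (c + ℓ)) →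
        ∀ lam h : ℝ, 0 < lam → 0 < h →
          ∀ t ∈ Icc a (a + 1), ∀ s ∈ Icc c (c + ℓ),
            let R : Set (ℝ × ℝ) := Icc a (a + 1) ×ˢ Icc c (c + ℓ)
            let μ := volume.restrict R
            let Gt : ℝ × ℝ → ℂ := fun z => derivWithin (fun u => G (u, z.2)) (Icc a (a + 1)) z.1
            let Gs : ℝ × ℝ → ℂ := fun z => derivWithin (fun v => G (z.1, v)) (Icc c (c + ℓ)) z.2
            let Gts : ℝ × ℝ → ℂ := fun z => derivWithin (fun u => Gs (u, z.2)) (Icc a (a + 1)) z.1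
            ENNReal.ofReal ‖G (t, s)‖ ≤ ENNReal.ofReal C *
              ((1 + ENNReal.ofReal (lam ^ (1 / p))) *
                  (ENNReal.ofReal (ℓ ^ (-(1 / p))) + ENNReal.ofReal (h ^ (1 / p))) *
                  eLpNorm G (ENNReal.ofReal p) μ
                + (ENNReal.ofReal (ℓ ^ (-(1 / p))) + ENNReal.ofReal (h ^ (1 / p))) *
                  ENNReal.ofReal (lam ^ (1 / p - 1)) * eLpNorm Gt (ENNReal.ofReal p) μ
                + (1 + ENNReal.ofReal (lam ^ (1 / p))) *
                  ENNReal.ofReal (h ^ (1 / p - 1)) * eLpNorm Gs (ENNReal.ofReal p) μ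
                + ENNReal.ofReal (lam ^ (1 / p - 1)) * ENNReal.ofReal (h ^ (1 / p - 1)) *
                  eLpNorm Gts (ENNReal.ofReal p) μ) := by
  refine ⟨1, one_pos, ?_⟩
  intro p hp a c ℓ hℓ hℓ1 G hG lam h hlam hh t ht s hs
  intro R μ Gt Gs Gts
  rw [ENNReal.ofReal_one, one_mul]
  have hp0 : (0:ℝ) < p := lt_of_lt_of_le one_pos hp
  have hIab : a < a + 1 := by linarith
  have hJcd : c < c + ℓ := by linarith
  have huI : UniqueDiffOn ℝ (Icc a (a+1)) := uniqueDiffOn_Icc hIab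
  have huJ : UniqueDiffOn ℝ (Icc c (c+ℓ)) := uniqueDiffOn_Icc hJcd
  have huR : UniqueDiffOn ℝ R := huI.prod huJ
  have hGd : DifferentiableOn ℝ G R := hG.differentiableOn (by simp)
  have cG : ContinuousOn G R := hG.continuousOn
  set g1 : ℝ × ℝ → ℂ := fun z => fderivWithin ℝ G R z (1, 0) with hg1def
  set g2 : ℝ × ℝ → ℂ := fun z => fderivWithin ℝ G R z (0, 1) with hg2def
  have hfd : ContDiffOn ℝ (⊤ : ℕ∞) (fun z => fderivWithin ℝ G R z) R := hG.fderivWithin huR (by simp)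
  have hg1s : ContDiffOn ℝ (⊤ : ℕ∞) g1 R := hfd.clm_apply contDiffOn_const
  have hg2s : ContDiffOn ℝ (⊤ : ℕ∞) g2 R := hfd.clm_apply contDiffOn_const
  have hg2d : DifferentiableOn ℝ g2 R := hg2s.differentiableOn (by simp)
  set g12 : ℝ × ℝ → ℂ := fun z => fderivWithin ℝ g2 R z (1, 0) with hg12def
  have hg12s : ContDiffOn ℝ (⊤ : ℕ∞) g12 R := (hg2s.fderivWithin huR (by simp)).clm_apply contDiffOn_const
  have cg1 : ContinuousOn g1 R := hg1s.continuousOn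
  have cg2 : ContinuousOn g2 R := hg2s.continuousOn
  have cg12 : ContinuousOn g12 R := hg12s.continuousOn
  -- identification of the deriv-within functions with fderiv slices on R
  have hGt_eq : ∀ z ∈ R, Gt z = g1 z := by
    rintro ⟨u, v⟩ ⟨hu, hv⟩
    exact (slice_fst hGd hu hv).derivWithin (huI u hu)
  have hGs_eq : ∀ z ∈ R, Gs z = g2 z := by
    rintro ⟨u, v⟩ ⟨hu, hv⟩
    exact (slice_snd hGd hu hv).derivWithin (huJ v hv)
  have hGs_deriv : ∀ u ∈ Icc a (a+1), ∀ y ∈ Icc c (c+ℓ),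
      HasDerivWithinAt (fun x => Gs (x, y)) (g12 (u, y)) (Icc a (a+1)) u := by
    intro u hu y hy
    exact (slice_fst hg2d hu hy).congr (fun x hx => hGs_eq (x, y) ⟨hx, hy⟩)
      (hGs_eq (u, y) ⟨hu, hy⟩)
  have hGts_eq : ∀ z ∈ R, Gts z = g12 z := by
    rintro ⟨u, v⟩ ⟨hu, hv⟩
    exact (hGs_deriv u hu v hv).derivWithin (huI u hu)
  -- choice of small rectangle around (t,s)
  set δ := min 1 lam⁻¹ with hδdef
  have hδ0 : 0 < δ := lt_min one_pos (inv_pos.mpr hlam)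
  have hδ1 : δ ≤ 1 := min_le_left _ _
  have hδlam : δ ≤ lam⁻¹ := min_le_right _ _
  set η := min ℓ h⁻¹ with hηdef
  have hη0 : 0 < η := lt_min hℓ (inv_pos.mpr hh)
  have hηl : η ≤ ℓ := min_le_left _ _
  have hηh : η ≤ h⁻¹ := min_le_right _ _
  set α := min t (a + 1 - δ) with hαdef
  have hαa : a ≤ α := le_min ht.1 (by linarith)
  have hαβI : α + δ ≤ a + 1 := by
    have : α ≤ a + 1 - δ := min_le_right _ _
    linarith
  have hαβ : α ≤ α + δ := by linarith
  have htmem : t ∈ Icc α (α + δ) := by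
    refine ⟨min_le_left _ _, ?_⟩
    rcases le_total t (a + 1 - δ) with h1 | h1
    · rw [hαdef, min_eq_left h1]; linarith
    · rw [hαdef, min_eq_right h1]; linarith [ht.2]
  have hsubI : Icc α (α + δ) ⊆ Icc a (a + 1) := Icc_subset_Icc hαa hαβI
  set γ := min s (c + ℓ - η) with hγdef
  have hγc : c ≤ γ := le_min hs.1 (by linarith)
  have hγβJ : γ + η ≤ c + ℓ := by
    have : γ ≤ c + ℓ - η := min_le_right _ _
    linarith
  have hγβ : γ ≤ γ + η := by linarith
  have hsmem : s ∈ Icc γ (γ + η) := by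
    refine ⟨min_le_left _ _, ?_⟩
    rcases le_total s (c + ℓ - η) with h1 | h1
    · rw [hγdef, min_eq_left h1]; linarith
    · rw [hγdef, min_eq_right h1]; linarith [hs.2]
  have hsubJ : Icc γ (γ + η) ⊆ Icc c (c + ℓ) := Icc_subset_Icc hγc hγβJ
  set I' := Icc α (α + δ) with hI'def
  set J' := Icc γ (γ + η) with hJ'def
  set R' := I' ×ˢ J' with hR'def
  have hsubR : R' ⊆ R := prod_mono hsubI hsubJ
  have hmR' : MeasurableSet R' := measurableSet_Icc.prod measurableSet_Icc
  -- slice continuity helpers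
  have hmapx : ∀ y, y ∈ Icc c (c+ℓ) → MapsTo (fun x : ℝ => ((x, y) : ℝ × ℝ)) (Icc a (a+1)) R :=
    fun y hy x hx => ⟨hx, hy⟩
  have contx : ∀ (F : ℝ × ℝ → ℂ), ContinuousOn F R → ∀ y ∈ Icc c (c+ℓ),
      ContinuousOn (fun x => F (x, y)) (Icc a (a+1)) := by
    intro F hF y hy
    exact hF.comp ((continuous_id.prodMk continuous_const).continuousOn) (hmapx y hy)
  have conty : ∀ (F : ℝ × ℝ → ℂ), ContinuousOn F R → ∀ x ∈ Icc a (a+1),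
      ContinuousOn (fun y => F (x, y)) (Icc c (c+ℓ)) := by
    intro F hF x hx
    exact hF.comp ((continuous_const.prodMk continuous_id).continuousOn) (fun y hy => ⟨hx, hy⟩)
  set D := ENNReal.ofReal δ with hDdef
  set Hh := ENNReal.ofReal η with hHhdef
  have hDtop : D ≠ ⊤ := ENNReal.ofReal_ne_top
  have hHtop : Hh ≠ ⊤ := ENNReal.ofReal_ne_top
  have hD0 : D ≠ 0 := (ENNReal.ofReal_pos.mpr hδ0).ne'
  have hH0 : Hh ≠ 0 := (ENNReal.ofReal_pos.mpr hη0).ne'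
  -- step A : 1D bound in the x variable for G
  have stepA : ∀ y ∈ Icc c (c + ℓ),
      D * (‖G (t, y)‖₊ : ℝ≥0∞) ≤ (∫⁻ x in I', (‖G (x, y)‖₊ : ℝ≥0∞))
        + D * ∫⁻ x in I', (‖Gt (x, y)‖₊ : ℝ≥0∞) := by
    intro y hyJ
    have hd : ∀ x ∈ I', HasDerivWithinAt (fun x => G (x, y)) (Gt (x, y)) I' x := by
      intro x hx
      rw [show Gt (x, y) = g1 (x, y) from hGt_eq (x, y) ⟨hsubI hx, hyJ⟩]
      exact (slice_fst hGd (hsubI hx) hyJ).mono hsubI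
    have hc' : ContinuousOn (fun x => Gt (x, y)) I' := by
      refine ContinuousOn.congr ((contx g1 cg1 y hyJ).mono hsubI) ?_
      exact fun x hx => hGt_eq (x, y) ⟨hsubI hx, hyJ⟩
    have := oneD' hαβ htmem hd hc'
    rwa [add_sub_cancel_left] at this
  -- step B : 1D bound in the x variable for Gs
  have stepB : ∀ y ∈ Icc c (c + ℓ),
      D * (‖Gs (t, y)‖₊ : ℝ≥0∞) ≤ (∫⁻ x in I', (‖Gs (x, y)‖₊ : ℝ≥0∞))
        + D * ∫⁻ x in I', (‖Gts (x, y)‖₊ : ℝ≥0∞) := by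
    intro y hyJ
    have hd : ∀ x ∈ I', HasDerivWithinAt (fun x => Gs (x, y)) (Gts (x, y)) I' x := by
      intro x hx
      rw [show Gts (x, y) = g12 (x, y) from hGts_eq (x, y) ⟨hsubI hx, hyJ⟩]
      exact (hGs_deriv x (hsubI hx) y hyJ).mono hsubI
    have hc' : ContinuousOn (fun x => Gts (x, y)) I' := by
      refine ContinuousOn.congr ((contx g12 cg12 y hyJ).mono hsubI) ?_
      exact fun x hx => hGts_eq (x, y) ⟨hsubI hx, hyJ⟩
    have := oneD' hαβ htmem hd hc'
    rwa [add_sub_cancel_left] at this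
  -- step C : 1D bound in the y variable for G at x = t
  have stepC : Hh * (‖G (t, s)‖₊ : ℝ≥0∞) ≤ (∫⁻ y in J', (‖G (t, y)‖₊ : ℝ≥0∞))
        + Hh * ∫⁻ y in J', (‖Gs (t, y)‖₊ : ℝ≥0∞) := by
    have hd : ∀ y ∈ J', HasDerivWithinAt (fun y => G (t, y)) (Gs (t, y)) J' y := by
      intro y hy
      rw [show Gs (t, y) = g2 (t, y) from hGs_eq (t, y) ⟨ht, hsubJ hy⟩]
      exact (slice_snd hGd ht (hsubJ hy)).mono hsubJ
    have hc' : ContinuousOn (fun y => Gs (t, y)) J' := by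
      refine ContinuousOn.congr ((conty g2 cg2 t ht).mono hsubJ) ?_
      exact fun y hy => hGs_eq (t, y) ⟨ht, hsubJ hy⟩
    have := oneD' hγβ hsmem hd hc'
    rwa [add_sub_cancel_left] at this
  -- slice measurability (in x, for fixed y)
  have mx : ∀ (F : ℝ × ℝ → ℂ), (∀ y ∈ Icc c (c+ℓ), ContinuousOn (fun x => F (x, y)) I') →
      ∀ y ∈ Icc c (c+ℓ), AEMeasurable (fun x => (‖F (x, y)‖₊ : ℝ≥0∞)) (volume.restrict I') := by
    intro F hF y hy
    exact ((hF y hy).aemeasurable measurableSet_Icc).enorm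
  have cGx : ∀ y ∈ Icc c (c+ℓ), ContinuousOn (fun x => G (x, y)) I' :=
    fun y hy => (contx G cG y hy).mono hsubI
  have cGtx : ∀ y ∈ Icc c (c+ℓ), ContinuousOn (fun x => Gt (x, y)) I' := by
    intro y hy
    exact ContinuousOn.congr ((contx g1 cg1 y hy).mono hsubI)
      (fun x hx => hGt_eq (x, y) ⟨hsubI hx, hy⟩)
  have cGsx : ∀ y ∈ Icc c (c+ℓ), ContinuousOn (fun x => Gs (x, y)) I' := by
    intro y hy
    exact ContinuousOn.congr ((contx g2 cg2 y hy).mono hsubI)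
      (fun x hx => hGs_eq (x, y) ⟨hsubI hx, hy⟩)
  have cGtsx : ∀ y ∈ Icc c (c+ℓ), ContinuousOn (fun x => Gts (x, y)) I' := by
    intro y hy
    exact ContinuousOn.congr ((contx g12 cg12 y hy).mono hsubI)
      (fun x hx => hGts_eq (x, y) ⟨hsubI hx, hy⟩)
  -- 2D a.e.-measurability on R'
  have m2 : ∀ (F F₀ : ℝ × ℝ → ℂ), ContinuousOn F₀ R → (∀ z ∈ R, F z = F₀ z) →
      AEMeasurable (fun z => (‖F z‖₊ : ℝ≥0∞)) (volume.restrict R') := by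
    intro F F₀ hF₀ heq
    refine AEMeasurable.congr (((hF₀.mono hsubR).aemeasurable hmR').enorm) ?_
    filter_upwards [self_mem_ae_restrict hmR'] with z hz
    exact congrArg (fun w => (‖w‖₊ : ℝ≥0∞)) (heq z (hsubR hz)).symm
  have mG2 : AEMeasurable (fun z => (‖G z‖₊ : ℝ≥0∞)) (volume.restrict R') :=
    m2 G G cG (fun z _ => rfl)
  have mGt2 : AEMeasurable (fun z => (‖Gt z‖₊ : ℝ≥0∞)) (volume.restrict R') :=
    m2 Gt g1 cg1 hGt_eq
  have mGs2 : AEMeasurable (fun z => (‖Gs z‖₊ : ℝ≥0∞)) (volume.restrict R') :=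
    m2 Gs g2 cg2 hGs_eq
  have mGts2 : AEMeasurable (fun z => (‖Gts z‖₊ : ℝ≥0∞)) (volume.restrict R') :=
    m2 Gts g12 cg12 hGts_eq
  -- the combined integrand
  set Φ : ℝ × ℝ → ℝ≥0∞ := fun z => (‖G z‖₊ : ℝ≥0∞) + D * (‖Gt z‖₊ : ℝ≥0∞)
      + Hh * (‖Gs z‖₊ : ℝ≥0∞) + D * Hh * (‖Gts z‖₊ : ℝ≥0∞) with hΦdef
  -- inner splitting of the x-integral of Φ
  have stepPQ : ∀ y ∈ J', D * (‖G (t, y)‖₊ : ℝ≥0∞) + D * Hh * (‖Gs (t, y)‖₊ : ℝ≥0∞)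
      ≤ ∫⁻ x in I', Φ (x, y) := by
    intro y hy
    have hyJ := hsubJ hy
    have m1 := mx G cGx y hyJ
    have m2' := mx Gt cGtx y hyJ
    have m3 := mx Gs cGsx y hyJ
    have hsplit : ∫⁻ x in I', Φ (x, y)
        = (∫⁻ x in I', (‖G (x, y)‖₊ : ℝ≥0∞)) + D * (∫⁻ x in I', (‖Gt (x, y)‖₊ : ℝ≥0∞))
          + Hh * (∫⁻ x in I', (‖Gs (x, y)‖₊ : ℝ≥0∞))
          + D * Hh * (∫⁻ x in I', (‖Gts (x, y)‖₊ : ℝ≥0∞)) := by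
      rw [hΦdef]
      simp only []
      rw [lintegral_add_left' (f := fun x => (‖G (x, y)‖₊ : ℝ≥0∞) + D * (‖Gt (x, y)‖₊ : ℝ≥0∞) + Hh * (‖Gs (x, y)‖₊ : ℝ≥0∞)) ((m1.add (m2'.const_mul D)).add (m3.const_mul Hh)),
        lintegral_add_left' (f := fun x => (‖G (x, y)‖₊ : ℝ≥0∞) + D * (‖Gt (x, y)‖₊ : ℝ≥0∞)) (m1.add (m2'.const_mul D)),
        lintegral_add_left' m1,
        lintegral_const_mul' D _ hDtop, lintegral_const_mul' Hh _ hHtop,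
        lintegral_const_mul' (D * Hh) _ (ENNReal.mul_ne_top hDtop hHtop)]
    rw [hsplit]
    have hA := stepA y hyJ
    have hB := mul_le_mul_right (stepB y hyJ) Hh
    calc D * (‖G (t, y)‖₊ : ℝ≥0∞) + D * Hh * (‖Gs (t, y)‖₊ : ℝ≥0∞)
        = D * (‖G (t, y)‖₊ : ℝ≥0∞) + Hh * (D * (‖Gs (t, y)‖₊ : ℝ≥0∞)) := by ring
      _ ≤ ((∫⁻ x in I', (‖G (x, y)‖₊ : ℝ≥0∞)) + D * ∫⁻ x in I', (‖Gt (x, y)‖₊ : ℝ≥0∞))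
          + Hh * ((∫⁻ x in I', (‖Gs (x, y)‖₊ : ℝ≥0∞)) + D * ∫⁻ x in I', (‖Gts (x, y)‖₊ : ℝ≥0∞)) :=
          add_le_add hA hB
      _ = (∫⁻ x in I', (‖G (x, y)‖₊ : ℝ≥0∞)) + D * (∫⁻ x in I', (‖Gt (x, y)‖₊ : ℝ≥0∞))
          + Hh * (∫⁻ x in I', (‖Gs (x, y)‖₊ : ℝ≥0∞))
          + D * Hh * (∫⁻ x in I', (‖Gts (x, y)‖₊ : ℝ≥0∞)) := by ring
  -- integrate in y
  have mGty : AEMeasurable (fun y => (‖G (t, y)‖₊ : ℝ≥0∞)) (volume.restrict J') :=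
    (((conty G cG t ht).mono hsubJ).aemeasurable measurableSet_Icc).enorm
  have stepY : D * Hh * (‖G (t, s)‖₊ : ℝ≥0∞) ≤ ∫⁻ y in J', ∫⁻ x in I', Φ (x, y) := by
    have hC := mul_le_mul_right stepC D
    calc D * Hh * (‖G (t, s)‖₊ : ℝ≥0∞) = D * (Hh * (‖G (t, s)‖₊ : ℝ≥0∞)) := by ring
      _ ≤ D * ((∫⁻ y in J', (‖G (t, y)‖₊ : ℝ≥0∞)) + Hh * ∫⁻ y in J', (‖Gs (t, y)‖₊ : ℝ≥0∞)) := hC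
      _ = ∫⁻ y in J', (D * (‖G (t, y)‖₊ : ℝ≥0∞) + D * Hh * (‖Gs (t, y)‖₊ : ℝ≥0∞)) := by
          rw [lintegral_add_left' (mGty.const_mul D),
            lintegral_const_mul' D _ hDtop,
            lintegral_const_mul' (D * Hh) _ (ENNReal.mul_ne_top hDtop hHtop)]
          ring
      _ ≤ ∫⁻ y in J', ∫⁻ x in I', Φ (x, y) := by
          refine lintegral_mono_ae ?_
          filter_upwards [self_mem_ae_restrict measurableSet_Icc] with y hy
          exact stepPQ y hy
  -- Tonelli
  have hprodmeas : (volume.restrict I').prod (volume.restrict J') = volume.restrict R' := by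
    rw [Measure.prod_restrict, ← Measure.volume_eq_prod]
  have mΦ : AEMeasurable Φ (volume.restrict R') :=
    ((mG2.add (mGt2.const_mul D)).add (mGs2.const_mul Hh)).add (mGts2.const_mul (D * Hh))
  have tonelli : ∫⁻ y in J', ∫⁻ x in I', Φ (x, y) = ∫⁻ z in R', Φ z := by
    have mΦ' : AEMeasurable Φ ((volume.restrict I').prod (volume.restrict J')) := by
      rw [hprodmeas]; exact mΦ
    rw [← MeasureTheory.lintegral_prod_symm Φ mΦ', hprodmeas]
  have hdouble : ∫⁻ z in R', Φ z
      = (∫⁻ z in R', (‖G z‖₊ : ℝ≥0∞)) + D * (∫⁻ z in R', (‖Gt z‖₊ : ℝ≥0∞))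
        + Hh * (∫⁻ z in R', (‖Gs z‖₊ : ℝ≥0∞)) + D * Hh * (∫⁻ z in R', (‖Gts z‖₊ : ℝ≥0∞)) := by
    rw [hΦdef]
    simp only []
    rw [lintegral_add_left' (f := fun z => (‖G z‖₊ : ℝ≥0∞) + D * (‖Gt z‖₊ : ℝ≥0∞) + Hh * (‖Gs z‖₊ : ℝ≥0∞)) ((mG2.add (mGt2.const_mul D)).add (mGs2.const_mul Hh)),
      lintegral_add_left' (f := fun z => (‖G z‖₊ : ℝ≥0∞) + D * (‖Gt z‖₊ : ℝ≥0∞)) (mG2.add (mGt2.const_mul D)),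
      lintegral_add_left' mG2,
      lintegral_const_mul' D _ hDtop, lintegral_const_mul' Hh _ hHtop,
      lintegral_const_mul' (D * Hh) _ (ENNReal.mul_ne_top hDtop hHtop)]
  -- Hoelder
  set q := ENNReal.ofReal p with hqdef
  have hq1 : (1:ℝ≥0∞) ≤ q := by
    rw [hqdef, ← ENNReal.ofReal_one]; exact ENNReal.ofReal_le_ofReal hp
  have hqtoReal : q.toReal = p := ENNReal.toReal_ofReal hp0.le
  have hvol : (volume.restrict R') Set.univ = D * Hh := by
    rw [Measure.restrict_apply_univ, hR'def, Measure.volume_eq_prod, Measure.prod_prod,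
      hI'def, hJ'def, Real.volume_Icc, Real.volume_Icc, add_sub_cancel_left, add_sub_cancel_left]
  have holder : ∀ (F : ℝ × ℝ → ℂ), AEStronglyMeasurable F (volume.restrict R') →
      (∫⁻ z in R', (‖F z‖₊ : ℝ≥0∞)) ≤ eLpNorm F q μ * (D * Hh) ^ (1 - 1/p) := by
    intro F hF
    have h2 := eLpNorm_le_eLpNorm_mul_rpow_measure_univ (μ := volume.restrict R') hq1 hF
    rw [hvol] at h2
    have h3 : 1 / (1:ℝ≥0∞).toReal - 1 / q.toReal = 1 - 1/p := by
      rw [ENNReal.toReal_one, hqtoReal]; norm_num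
    rw [h3] at h2
    rw [show (∫⁻ z in R', (‖F z‖₊ : ℝ≥0∞)) = eLpNorm F 1 (volume.restrict R') from (eLpNorm_one_eq_lintegral_enorm (f := F) (μ := volume.restrict R')).symm]
    exact h2.trans (mul_le_mul_left
      (eLpNorm_mono_measure F (Measure.restrict_mono hsubR le_rfl)) _)
  have sm : ∀ (F F₀ : ℝ × ℝ → ℂ), ContinuousOn F₀ R → (∀ z ∈ R, F z = F₀ z) →
      AEStronglyMeasurable F (volume.restrict R') := by
    intro F F₀ h₀ heq
    refine ((h₀.mono hsubR).aestronglyMeasurable hmR').congr ?_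
    filter_upwards [self_mem_ae_restrict hmR'] with z hz
    exact (heq z (hsubR hz)).symm
  have hG_lp := holder G (sm G G cG fun z _ => rfl)
  have hGt_lp := holder Gt (sm Gt g1 cg1 hGt_eq)
  have hGs_lp := holder Gs (sm Gs g2 cg2 hGs_eq)
  have hGts_lp := holder Gts (sm Gts g12 cg12 hGts_eq)
  -- scalar arithmetic
  have hDH0 : D * Hh ≠ 0 := mul_ne_zero hD0 hH0
  have hDHtop : D * Hh ≠ ⊤ := ENNReal.mul_ne_top hDtop hHtop
  have hδη0 : 0 < δ * η := mul_pos hδ0 hη0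
  have hDH : D * Hh = ENNReal.ofReal (δ * η) := (ENNReal.ofReal_mul hδ0.le).symm
  have hp1p : (1:ℝ)/p ≤ 1 := by rw [div_le_one hp0]; exact hp
  have he0 : (0:ℝ) ≤ 1 - 1/p := by linarith
  have hp0' : (0:ℝ) ≤ 1/p := by positivity
  have hxe : ∀ x : ℝ, 0 < x → x⁻¹ * x ^ (1-1/p) = x ^ (-(1/p)) := by
    intro x hx
    rw [rpow_inv_mul hx, show (1-1/p)-1 = -(1/p) by ring]
  have hsplit_pow : (δ*η)^(1-1/p) = δ^(1-1/p) * η^(1-1/p) := Real.mul_rpow hδ0.le hη0.le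
  -- real bounds on the coefficients
  have hb1 : δ ^ (-(1/p)) ≤ 1 + lam ^ (1/p) := by
    rw [hδdef]
    have h1 := min_inv_bound one_pos hlam (1/p) hp0'
    rw [inv_one] at h1
    refine h1.trans ((max_rpow_le zero_le_one hlam.le (1/p)).trans ?_)
    rw [Real.one_rpow]
  have hb2 : η ^ (-(1/p)) ≤ ℓ ^ (-(1/p)) + h ^ (1/p) := by
    rw [hηdef]
    refine (min_inv_bound hℓ hh (1/p) hp0').trans
      ((max_rpow_le (inv_nonneg.mpr hℓ.le) hh.le (1/p)).trans ?_)
    rw [Real.inv_rpow hℓ.le, ← Real.rpow_neg hℓ.le]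
  have hb3 : δ ^ (1-1/p) ≤ lam ^ (1/p-1) := by
    have := Real.rpow_le_rpow hδ0.le hδlam he0
    rwa [Real.inv_rpow hlam.le, ← Real.rpow_neg hlam.le, show -(1-1/p) = 1/p-1 by ring] at this
  have hb4 : η ^ (1-1/p) ≤ h ^ (1/p-1) := by
    have := Real.rpow_le_rpow hη0.le hηh he0
    rwa [Real.inv_rpow hh.le, ← Real.rpow_neg hh.le, show -(1-1/p) = 1/p-1 by ring] at this
  -- ENNReal scalar identities
  have K1 : (D*Hh)⁻¹ * (D*Hh) ^ (1-1/p) = ENNReal.ofReal (δ^(-(1/p)) * η^(-(1/p))) := by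
    rw [hDH, ← ENNReal.ofReal_inv_of_pos hδη0, ENNReal.ofReal_rpow_of_pos hδη0,
      ← ENNReal.ofReal_mul (inv_nonneg.mpr hδη0.le)]
    congr 1
    rw [hsplit_pow, mul_inv]
    calc δ⁻¹ * η⁻¹ * (δ^(1-1/p) * η^(1-1/p)) = (δ⁻¹*δ^(1-1/p))*(η⁻¹*η^(1-1/p)) := by ring
      _ = _ := by rw [hxe δ hδ0, hxe η hη0]
  have K2 : (D*Hh)⁻¹ * D * (D*Hh) ^ (1-1/p) = ENNReal.ofReal (δ^(1-1/p) * η^(-(1/p))) := by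
    rw [hDH, ← ENNReal.ofReal_inv_of_pos hδη0, ENNReal.ofReal_rpow_of_pos hδη0, hDdef,
      ← ENNReal.ofReal_mul (inv_nonneg.mpr hδη0.le),
      ← ENNReal.ofReal_mul (by positivity)]
    congr 1
    rw [hsplit_pow, mul_inv]
    calc δ⁻¹ * η⁻¹ * δ * (δ^(1-1/p) * η^(1-1/p))
        = (δ⁻¹ * δ) * δ^(1-1/p) * (η⁻¹*η^(1-1/p)) := by ring
      _ = _ := by rw [inv_mul_cancel₀ hδ0.ne', hxe η hη0, one_mul]
  have K3 : (D*Hh)⁻¹ * Hh * (D*Hh) ^ (1-1/p) = ENNReal.ofReal (δ^(-(1/p)) * η^(1-1/p)) := by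
    rw [hDH, ← ENNReal.ofReal_inv_of_pos hδη0, ENNReal.ofReal_rpow_of_pos hδη0, hHhdef,
      ← ENNReal.ofReal_mul (inv_nonneg.mpr hδη0.le),
      ← ENNReal.ofReal_mul (by positivity)]
    congr 1
    rw [hsplit_pow, mul_inv]
    calc δ⁻¹ * η⁻¹ * η * (δ^(1-1/p) * η^(1-1/p))
        = (η⁻¹ * η) * η^(1-1/p) * (δ⁻¹*δ^(1-1/p)) := by ring
      _ = _ := by rw [inv_mul_cancel₀ hη0.ne', hxe δ hδ0, one_mul]; ring
  have K4 : (D*Hh)⁻¹ * (D*Hh) * (D*Hh) ^ (1-1/p) = ENNReal.ofReal (δ^(1-1/p) * η^(1-1/p)) := by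
    rw [ENNReal.inv_mul_cancel hDH0 hDHtop, one_mul, hDH,
      ENNReal.ofReal_rpow_of_pos hδη0, hsplit_pow]
  -- coefficient bounds in ℝ≥0∞
  have T1c : ENNReal.ofReal (δ^(-(1/p)) * η^(-(1/p)))
      ≤ (1 + ENNReal.ofReal (lam^(1/p))) * (ENNReal.ofReal (ℓ^(-(1/p))) + ENNReal.ofReal (h^(1/p))) := by
    calc ENNReal.ofReal (δ^(-(1/p)) * η^(-(1/p)))
        ≤ ENNReal.ofReal ((1 + lam^(1/p)) * (ℓ^(-(1/p)) + h^(1/p))) :=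
          ENNReal.ofReal_le_ofReal (mul_le_mul hb1 hb2 (Real.rpow_nonneg hη0.le _) (by positivity))
      _ = _ := by
          rw [ENNReal.ofReal_mul (by positivity),
            ENNReal.ofReal_add (by positivity) (Real.rpow_nonneg hh.le _),
            ENNReal.ofReal_add zero_le_one (Real.rpow_nonneg hlam.le _), ENNReal.ofReal_one]
  have T2c : ENNReal.ofReal (δ^(1-1/p) * η^(-(1/p)))
      ≤ (ENNReal.ofReal (ℓ^(-(1/p))) + ENNReal.ofReal (h^(1/p))) * ENNReal.ofReal (lam^(1/p-1)) := by
    calc ENNReal.ofReal (δ^(1-1/p) * η^(-(1/p)))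
        ≤ ENNReal.ofReal ((ℓ^(-(1/p)) + h^(1/p)) * lam^(1/p-1)) := by
          refine ENNReal.ofReal_le_ofReal ?_
          rw [mul_comm]
          exact mul_le_mul hb2 hb3 (Real.rpow_nonneg hδ0.le _) (by positivity)
      _ = _ := by
          rw [ENNReal.ofReal_mul (by positivity),
            ENNReal.ofReal_add (by positivity) (Real.rpow_nonneg hh.le _)]
  have T3c : ENNReal.ofReal (δ^(-(1/p)) * η^(1-1/p))
      ≤ (1 + ENNReal.ofReal (lam^(1/p))) * ENNReal.ofReal (h^(1/p-1)) := by
    calc ENNReal.ofReal (δ^(-(1/p)) * η^(1-1/p))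
        ≤ ENNReal.ofReal ((1 + lam^(1/p)) * h^(1/p-1)) :=
          ENNReal.ofReal_le_ofReal (mul_le_mul hb1 hb4 (Real.rpow_nonneg hη0.le _) (by positivity))
      _ = _ := by
          rw [ENNReal.ofReal_mul (by positivity),
            ENNReal.ofReal_add zero_le_one (Real.rpow_nonneg hlam.le _), ENNReal.ofReal_one]
  have T4c : ENNReal.ofReal (δ^(1-1/p) * η^(1-1/p))
      ≤ ENNReal.ofReal (lam^(1/p-1)) * ENNReal.ofReal (h^(1/p-1)) := by
    rw [← ENNReal.ofReal_mul (by positivity)]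
    exact ENNReal.ofReal_le_ofReal
      (mul_le_mul hb3 hb4 (Real.rpow_nonneg hη0.le _) (by positivity))
  -- final assembly
  have B1 : (D*Hh)⁻¹ * (∫⁻ z in R', (‖G z‖₊ : ℝ≥0∞))
      ≤ (1 + ENNReal.ofReal (lam^(1/p))) * (ENNReal.ofReal (ℓ^(-(1/p))) + ENNReal.ofReal (h^(1/p)))
        * eLpNorm G q μ := by
    calc (D*Hh)⁻¹ * (∫⁻ z in R', (‖G z‖₊ : ℝ≥0∞))
        ≤ (D*Hh)⁻¹ * (eLpNorm G q μ * (D*Hh) ^ (1-1/p)) := mul_le_mul_right hG_lp _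
      _ = ((D*Hh)⁻¹ * (D*Hh) ^ (1-1/p)) * eLpNorm G q μ := by ring
      _ = ENNReal.ofReal (δ^(-(1/p)) * η^(-(1/p))) * eLpNorm G q μ := by rw [K1]
      _ ≤ _ := mul_le_mul_left T1c _
  have B2 : (D*Hh)⁻¹ * (D * ∫⁻ z in R', (‖Gt z‖₊ : ℝ≥0∞))
      ≤ (ENNReal.ofReal (ℓ^(-(1/p))) + ENNReal.ofReal (h^(1/p))) * ENNReal.ofReal (lam^(1/p-1))
        * eLpNorm Gt q μ := by
    calc (D*Hh)⁻¹ * (D * ∫⁻ z in R', (‖Gt z‖₊ : ℝ≥0∞))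
        ≤ (D*Hh)⁻¹ * (D * (eLpNorm Gt q μ * (D*Hh) ^ (1-1/p))) :=
          mul_le_mul_right (mul_le_mul_right hGt_lp D) _
      _ = ((D*Hh)⁻¹ * D * (D*Hh) ^ (1-1/p)) * eLpNorm Gt q μ := by ring
      _ = ENNReal.ofReal (δ^(1-1/p) * η^(-(1/p))) * eLpNorm Gt q μ := by rw [K2]
      _ ≤ _ := mul_le_mul_left T2c _
  have B3 : (D*Hh)⁻¹ * (Hh * ∫⁻ z in R', (‖Gs z‖₊ : ℝ≥0∞))
      ≤ (1 + ENNReal.ofReal (lam^(1/p))) * ENNReal.ofReal (h^(1/p-1)) * eLpNorm Gs q μ := by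
    calc (D*Hh)⁻¹ * (Hh * ∫⁻ z in R', (‖Gs z‖₊ : ℝ≥0∞))
        ≤ (D*Hh)⁻¹ * (Hh * (eLpNorm Gs q μ * (D*Hh) ^ (1-1/p))) :=
          mul_le_mul_right (mul_le_mul_right hGs_lp Hh) _
      _ = ((D*Hh)⁻¹ * Hh * (D*Hh) ^ (1-1/p)) * eLpNorm Gs q μ := by ring
      _ = ENNReal.ofReal (δ^(-(1/p)) * η^(1-1/p)) * eLpNorm Gs q μ := by rw [K3]
      _ ≤ _ := mul_le_mul_left T3c _
  have B4 : (D*Hh)⁻¹ * (D * Hh * ∫⁻ z in R', (‖Gts z‖₊ : ℝ≥0∞))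
      ≤ ENNReal.ofReal (lam^(1/p-1)) * ENNReal.ofReal (h^(1/p-1)) * eLpNorm Gts q μ := by
    calc (D*Hh)⁻¹ * (D * Hh * ∫⁻ z in R', (‖Gts z‖₊ : ℝ≥0∞))
        ≤ (D*Hh)⁻¹ * (D * Hh * (eLpNorm Gts q μ * (D*Hh) ^ (1-1/p))) :=
          mul_le_mul_right (mul_le_mul_right hGts_lp _) _
      _ = ((D*Hh)⁻¹ * (D*Hh) * (D*Hh) ^ (1-1/p)) * eLpNorm Gts q μ := by ring
      _ = ENNReal.ofReal (δ^(1-1/p) * η^(1-1/p)) * eLpNorm Gts q μ := by rw [K4]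
      _ ≤ _ := mul_le_mul_left T4c _
  have final : ENNReal.ofReal ‖G (t, s)‖
      ≤ (1 + ENNReal.ofReal (lam^(1/p))) * (ENNReal.ofReal (ℓ^(-(1/p))) + ENNReal.ofReal (h^(1/p)))
          * eLpNorm G q μ
        + (ENNReal.ofReal (ℓ^(-(1/p))) + ENNReal.ofReal (h^(1/p))) * ENNReal.ofReal (lam^(1/p-1))
          * eLpNorm Gt q μ
        + (1 + ENNReal.ofReal (lam^(1/p))) * ENNReal.ofReal (h^(1/p-1)) * eLpNorm Gs q μ
        + ENNReal.ofReal (lam^(1/p-1)) * ENNReal.ofReal (h^(1/p-1)) * eLpNorm Gts q μ := by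
    calc (ENNReal.ofReal ‖G (t, s)‖ : ℝ≥0∞) = (D*Hh)⁻¹ * (D * Hh * ENNReal.ofReal ‖G (t, s)‖) := by
          rw [← mul_assoc, ENNReal.inv_mul_cancel hDH0 hDHtop, one_mul]
      _ = (D*Hh)⁻¹ * (D * Hh * (‖G (t, s)‖₊ : ℝ≥0∞)) := by rw [ofReal_norm, enorm_eq_nnnorm]
      _ ≤ (D*Hh)⁻¹ * ((∫⁻ z in R', (‖G z‖₊ : ℝ≥0∞)) + D * (∫⁻ z in R', (‖Gt z‖₊ : ℝ≥0∞))
            + Hh * (∫⁻ z in R', (‖Gs z‖₊ : ℝ≥0∞)) + D * Hh * (∫⁻ z in R', (‖Gts z‖₊ : ℝ≥0∞))) :=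
          mul_le_mul_right (stepY.trans (le_of_eq (tonelli.trans hdouble))) _
      _ = (D*Hh)⁻¹ * (∫⁻ z in R', (‖G z‖₊ : ℝ≥0∞))
            + (D*Hh)⁻¹ * (D * ∫⁻ z in R', (‖Gt z‖₊ : ℝ≥0∞))
            + (D*Hh)⁻¹ * (Hh * ∫⁻ z in R', (‖Gs z‖₊ : ℝ≥0∞))
            + (D*Hh)⁻¹ * (D * Hh * ∫⁻ z in R', (‖Gts z‖₊ : ℝ≥0∞)) := by ring
      _ ≤ _ := add_le_add (add_le_add (add_le_add B1 B2) B3) B4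
  exact final
end

section
/- Let 0 < c0 < 1 and let M f(x) = sup_{0 < s < c0·t, 1 ≤ t ≤ 2} |f * σ_t^s(x)| be the local two-parameter maximal operator over tori in ℝ³. If for some 1 ≤ p ≤ q ≤ ∞ the estimate ‖M f‖_{L^q(ℝ³)} ≤ C·‖f‖_{L^p(ℝ³)} holds for all characteristic functions f of measurable sets, then necessarily 3 + 1/q ≥ 7/p. (Test family: f_r = characteristic function of {(x₁,x₂,x₃) : |x₁| < r², |x₂| < r, |x₃| < r⁴} for small r > 0, for which M f_r(x) ≳ r³ on a set of measure ≳ r.) -/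
open MeasureTheory
open scoped ENNReal

/-- The averaging operator `𝒜_t^s f = f * σ_t^s` over the torus `𝕋_t^s`, for real-valued
`f` on `ℝ³`. -/
noncomputable def torusAvgR (f : (Fin 3 → ℝ) → ℝ) (t s : ℝ) (x : Fin 3 → ℝ) : ℝ :=
  ∫ θ in (0:ℝ)..(2 * Real.pi), ∫ φ in (0:ℝ)..(2 * Real.pi),
    f (x - ![(t + s * Real.cos θ) * Real.cos φ, (t + s * Real.cos θ) * Real.sin φ,
      s * Real.sin θ])

def boxSet (r : ℝ) : Set (Fin 3 → ℝ) :=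
  Set.univ.pi fun i => ![Set.Ioo (-r^2) (r^2), Set.Ioo (-r) r, Set.Ioo (-r^4) (r^4)] i

lemma boxSet_measurable (r : ℝ) : MeasurableSet (boxSet r) := by
  apply MeasurableSet.univ_pi
  intro i; fin_cases i <;> simp <;> exact measurableSet_Ioo

set_option maxHeartbeats 1000000 in
lemma geom_mem {c0 r : ℝ} (h0 : 0 < c0) (h1 : c0 < 1) (hr : 0 < r) (hr1 : r < 1)
    (x : Fin 3 → ℝ) (hx0 : x 0 ∈ Set.Icc (1:ℝ) 2) (hx1 : x 1 ∈ Set.Icc (-(r/4)) (r/4))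
    (hx2 : x 2 ∈ Set.Icc (c0/4) (c0/2))
    {θ φ : ℝ} (hθ : θ ∈ Set.Icc (Real.pi/2) (Real.pi/2 + r^2/8))
    (hφ : φ ∈ Set.Icc (r/8) (r/4)) :
    x - ![(x 0 + x 2 * Real.cos θ) * Real.cos φ, (x 0 + x 2 * Real.cos θ) * Real.sin φ,
      x 2 * Real.sin θ] ∈ boxSet r := by
  obtain ⟨ht1, ht2⟩ := hx0
  obtain ⟨hy1, hy2⟩ := hx1
  obtain ⟨hs1, hs2⟩ := hx2
  obtain ⟨u, rfl⟩ : ∃ u, θ = Real.pi/2 + u := ⟨θ - Real.pi/2, by ring⟩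
  obtain ⟨hθ1, hθ2⟩ := hθ
  obtain ⟨hφ1, hφ2⟩ := hφ
  have hpi : (3:ℝ) < Real.pi := by have := Real.pi_gt_three; linarith
  have hr2 : r^2 ≤ 1 := by
    have := mul_nonneg (by linarith : (0:ℝ) ≤ 1 - r) (by linarith : (0:ℝ) ≤ 1 + r)
    linarith [this]
  have hr2pos : 0 < r^2 := by positivity
  have hr4pos : 0 < r^4 := by positivity
  have hu0 : 0 ≤ u := by linarith
  have hu1 : u ≤ r^2/8 := by linarith
  have hcosθ : Real.cos (Real.pi/2 + u) = -Real.sin u := by rw [Real.cos_add]; simp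
  have hsinθ : Real.sin (Real.pi/2 + u) = Real.cos u := by rw [Real.sin_add]; simp
  have hsinu_le : Real.sin u ≤ u := Real.sin_le hu0
  have hsinu_nn : 0 ≤ Real.sin u := Real.sin_nonneg_of_nonneg_of_le_pi hu0 (by linarith)
  have hcosu_le : Real.cos u ≤ 1 := Real.cos_le_one u
  have hcosu_ge : 1 - u^2/2 ≤ Real.cos u := Real.one_sub_sq_div_two_le_cos
  have hφ0 : 0 ≤ φ := by linarith
  have hsinφ_le : Real.sin φ ≤ r/4 := (Real.sin_le hφ0).trans hφ2
  have hsinφ_nn : 0 ≤ Real.sin φ := Real.sin_nonneg_of_nonneg_of_le_pi hφ0 (by linarith)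
  have hcosφ_le : Real.cos φ ≤ 1 := Real.cos_le_one φ
  have hcosφ_ge : 1 - φ^2/2 ≤ Real.cos φ := Real.one_sub_sq_div_two_le_cos
  have hs0 : (0:ℝ) < x 2 := by linarith
  have hshalf : x 2 ≤ 1/2 := by linarith
  have hssin : x 2 * Real.sin u ≤ r^2/16 := by
    have h := mul_le_mul hshalf (hsinu_le.trans hu1) hsinu_nn (by norm_num : (0:ℝ) ≤ 1/2)
    linarith
  have hssin0 : 0 ≤ x 2 * Real.sin u := mul_nonneg hs0.le hsinu_nn
  have hρ1 : (1:ℝ)/2 ≤ x 0 + x 2 * Real.cos (Real.pi/2 + u) := by rw [hcosθ]; linarith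
  have hρ2 : x 0 + x 2 * Real.cos (Real.pi/2 + u) ≤ x 0 := by rw [hcosθ]; linarith
  have hρle2 : x 0 + x 2 * Real.cos (Real.pi/2 + u) ≤ 2 := by linarith
  have hφsq : φ^2 ≤ r^2/16 := by
    have h := mul_le_mul hφ2 hφ2 hφ0 (by linarith : (0:ℝ) ≤ r/4)
    linarith [h]
  have hcosφ2 : 1 - Real.cos φ ≤ r^2/32 := by linarith
  have hρcos : (x 0 + x 2 * Real.cos (Real.pi/2 + u)) * (1 - Real.cos φ) ≤ r^2/16 := by
    have h := mul_le_mul hρle2 hcosφ2 (by linarith) (by norm_num : (0:ℝ) ≤ 2)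
    linarith
  have hρsin_ub : (x 0 + x 2 * Real.cos (Real.pi/2 + u)) * Real.sin φ ≤ r/2 := by
    have h := mul_le_mul hρle2 hsinφ_le hsinφ_nn (by norm_num : (0:ℝ) ≤ 2)
    linarith
  have hρsin_lb : 0 ≤ (x 0 + x 2 * Real.cos (Real.pi/2 + u)) * Real.sin φ :=
    mul_nonneg (by linarith) hsinφ_nn
  have husq : u^2 ≤ r^4/64 := by
    have h := mul_le_mul hu1 hu1 hu0 (by positivity : (0:ℝ) ≤ r^2/8)
    linarith [h]
  have hscos_ub : x 2 - x 2 * Real.cos u ≤ r^4/256 := by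
    have h1 : 1 - Real.cos u ≤ r^4/128 := by linarith
    have h := mul_le_mul hshalf h1 (by linarith) (by norm_num : (0:ℝ) ≤ 1/2)
    linarith
  have hscos_lb : 0 ≤ x 2 - x 2 * Real.cos u := by
    have := mul_nonneg hs0.le (by linarith : 0 ≤ 1 - Real.cos u)
    linarith
  have hρcosφ_le : (x 0 + x 2 * Real.cos (Real.pi/2 + u)) * Real.cos φ ≤ x 0 :=
    (mul_le_of_le_one_right (by linarith) hcosφ_le).trans hρ2
  rw [boxSet, Set.mem_univ_pi]
  intro i
  fin_cases i <;>
    simp only [Fin.zero_eta, Fin.mk_one, Fin.reduceFinMk, Matrix.cons_val_zero,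
      Matrix.cons_val_one, Matrix.head_cons, Pi.sub_apply, Matrix.cons_val_two,
      Matrix.tail_cons, Set.mem_Ioo, Fin.isValue] <;> constructor
  · linarith
  · have h1 : x 0 - (x 0 + x 2 * Real.cos (Real.pi/2 + u)) * Real.cos φ
        = x 2 * Real.sin u + (x 0 + x 2 * Real.cos (Real.pi/2 + u)) * (1 - Real.cos φ) := by
      rw [hcosθ]; ring
    rw [h1]; linarith
  · linarith
  · linarith
  · rw [hsinθ]; linarith
  · rw [hsinθ]; linarith

noncomputable def boxInd (r : ℝ) : (Fin 3 → ℝ) → ℝ := (boxSet r).indicator fun _ => 1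

lemma boxInd_nonneg (r : ℝ) (y : Fin 3 → ℝ) : 0 ≤ boxInd r y :=
  Set.indicator_nonneg (fun _ _ => zero_le_one) y

lemma boxInd_le_one (r : ℝ) (y : Fin 3 → ℝ) : boxInd r y ≤ 1 := by
  unfold boxInd
  by_cases h : y ∈ boxSet r <;> simp [h]

lemma boxInd_abs_le_one (r : ℝ) (y : Fin 3 → ℝ) : ‖boxInd r y‖ ≤ 1 := by
  rw [Real.norm_eq_abs, abs_le]
  exact ⟨by linarith [boxInd_nonneg r y], boxInd_le_one r y⟩

lemma phi_continuous (t s : ℝ) (x : Fin 3 → ℝ) : Continuous (fun p : ℝ × ℝ =>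
    x - ![(t + s * Real.cos p.1) * Real.cos p.2, (t + s * Real.cos p.1) * Real.sin p.2,
      s * Real.sin p.1]) := by
  apply continuous_const.sub
  apply continuous_pi
  intro i
  fin_cases i <;> simp <;> fun_prop

lemma twopi_pos : (0:ℝ) < 2 * Real.pi := by positivity

noncomputable abbrev nu : Measure ℝ := volume.restrict (Set.Ioc (0:ℝ) (2 * Real.pi))

instance : IsFiniteMeasure nu := by
  constructor
  rw [Measure.restrict_apply_univ, Real.volume_Ioc]
  exact ENNReal.ofReal_lt_top

set_option maxHeartbeats 1000000 in
lemma avg_lower {c0 r : ℝ} (h0 : 0 < c0) (h1 : c0 < 1) (hr : 0 < r) (hr1 : r < 1)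
    (x : Fin 3 → ℝ) (hx0 : x 0 ∈ Set.Icc (1:ℝ) 2) (hx1 : x 1 ∈ Set.Icc (-(r/4)) (r/4))
    (hx2 : x 2 ∈ Set.Icc (c0/4) (c0/2))
    (hgeom : ∀ {θ φ : ℝ}, θ ∈ Set.Icc (Real.pi/2) (Real.pi/2 + r^2/8) →
      φ ∈ Set.Icc (r/8) (r/4) →
      x - ![(x 0 + x 2 * Real.cos θ) * Real.cos φ, (x 0 + x 2 * Real.cos θ) * Real.sin φ,
        x 2 * Real.sin θ] ∈ boxSet r) :
    r^3/64 ≤ torusAvgR (boxInd r) (x 0) (x 2) x := by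
  have hpi : (3:ℝ) < Real.pi := by have := Real.pi_gt_three; linarith
  have h2π : (0:ℝ) ≤ 2 * Real.pi := twopi_pos.le
  set F : ℝ × ℝ → ℝ := fun p => boxInd r
    (x - ![(x 0 + x 2 * Real.cos p.1) * Real.cos p.2,
      (x 0 + x 2 * Real.cos p.1) * Real.sin p.2, x 2 * Real.sin p.1]) with hF
  have hFm : Measurable F :=
    (measurable_const.indicator (boxSet_measurable r)).comp
      (phi_continuous (x 0) (x 2) x).measurable
  have hFb : ∀ p, ‖F p‖ ≤ 1 := fun p => boxInd_abs_le_one r _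
  have hFnn : ∀ p, 0 ≤ F p := fun p => boxInd_nonneg r _
  have hFint : Integrable F (nu.prod nu) :=
    (integrable_const (1:ℝ)).mono' hFm.aestronglyMeasurable (ae_of_all _ hFb)
  have h_inner_int : Integrable (fun θ => ∫ φ, F (θ, φ) ∂nu) nu :=
    hFint.integral_prod_left
  have hIccθ : Set.Icc (Real.pi/2) (Real.pi/2 + r^2/8) ⊆ Set.Ioc 0 (2 * Real.pi) := by
    intro θ hθ
    obtain ⟨hθ1, hθ2⟩ := hθ
    constructor <;> nlinarith
  have hIccφ : Set.Icc (r/8) (r/4) ⊆ Set.Ioc 0 (2 * Real.pi) := by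
    intro φ hφ
    obtain ⟨hφ1, hφ2⟩ := hφ
    constructor <;> nlinarith
  -- rewrite torusAvgR as double integral over nu
  have hrw : torusAvgR (boxInd r) (x 0) (x 2) x = ∫ θ, (∫ φ, F (θ, φ) ∂nu) ∂nu := by
    rw [torusAvgR, intervalIntegral.integral_of_le h2π]
    apply setIntegral_congr_fun measurableSet_Ioc
    intro θ _
    dsimp only
    rw [intervalIntegral.integral_of_le h2π]
  rw [hrw]
  -- lower bound the inner integral
  have hmeasφ : nu (Set.Icc (r/8) (r/4)) = ENNReal.ofReal (r/8) := by
    rw [Measure.restrict_apply measurableSet_Icc,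
      Set.inter_eq_self_of_subset_left hIccφ, Real.volume_Icc]
    norm_num
    ring_nf
  have hmeasθ : nu (Set.Icc (Real.pi/2) (Real.pi/2 + r^2/8)) = ENNReal.ofReal (r^2/8) := by
    rw [Measure.restrict_apply measurableSet_Icc,
      Set.inter_eq_self_of_subset_left hIccθ, Real.volume_Icc]
    norm_num
  have step1 : ∀ θ ∈ Set.Icc (Real.pi/2) (Real.pi/2 + r^2/8), r/8 ≤ ∫ φ, F (θ, φ) ∂nu := by
    intro θ hθ
    have hint1 : Integrable ((Set.Icc (r/8) (r/4)).indicator fun _ => (1:ℝ)) nu :=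
      (integrable_const (1:ℝ)).indicator measurableSet_Icc
    have hint2 : Integrable (fun φ => F (θ, φ)) nu :=
      (integrable_const (1:ℝ)).mono'
        (hFm.comp (measurable_const.prodMk measurable_id)).aestronglyMeasurable
        (ae_of_all _ fun φ => hFb _)
    have hle : ∀ φ, (Set.Icc (r/8) (r/4)).indicator (fun _ => (1:ℝ)) φ ≤ F (θ, φ) := by
      intro φ
      by_cases h : φ ∈ Set.Icc (r/8) (r/4)
      · rw [Set.indicator_of_mem h]
        have hmem := hgeom hθ h
        simp only [hF, boxInd, Set.indicator_of_mem hmem]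
        exact le_rfl
      · rw [Set.indicator_of_notMem h]
        exact hFnn _
    have := integral_mono hint1 hint2 hle
    rwa [integral_indicator_const (1:ℝ) measurableSet_Icc, measureReal_def, hmeasφ, smul_eq_mul, mul_one,
      ENNReal.toReal_ofReal (by linarith)] at this
  have step2 : ∀ θ, (r/8) * (Set.Icc (Real.pi/2) (Real.pi/2 + r^2/8)).indicator
      (fun _ => (1:ℝ)) θ ≤ ∫ φ, F (θ, φ) ∂nu := by
    intro θ
    by_cases h : θ ∈ Set.Icc (Real.pi/2) (Real.pi/2 + r^2/8)
    · rw [Set.indicator_of_mem h, mul_one]; exact step1 θ h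
    · rw [Set.indicator_of_notMem h, mul_zero]
      exact integral_nonneg fun φ => hFnn _
  have hint3 : Integrable (fun θ => (r/8) * (Set.Icc (Real.pi/2) (Real.pi/2 + r^2/8)).indicator
      (fun _ => (1:ℝ)) θ) nu :=
    ((integrable_const (1:ℝ)).indicator measurableSet_Icc).const_mul _
  have := integral_mono hint3 h_inner_int step2
  rw [MeasureTheory.integral_const_mul, integral_indicator_const (1:ℝ) measurableSet_Icc, measureReal_def, hmeasθ,
    smul_eq_mul, mul_one, ENNReal.toReal_ofReal (by positivity)] at this
  calc r^3/64 = (r/8) * (r^2/8) := by ring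
  _ ≤ _ := this


/-- The local two-parameter maximal operator
`M f(x) = sup_{1 ≤ t ≤ 2, 0 < s < c₀ t} |𝒜_t^s f(x)|`. -/
noncomputable def torusMax (c0 : ℝ) (f : (Fin 3 → ℝ) → ℝ) (x : Fin 3 → ℝ) : ℝ :=
  ⨆ t ∈ Set.Icc (1:ℝ) 2, ⨆ s ∈ Set.Ioo 0 (c0 * t), |torusAvgR f t s x|

lemma avg_abs_le (f : (Fin 3 → ℝ) → ℝ) (hf : ∀ y, ‖f y‖ ≤ 1) (t s : ℝ) (x : Fin 3 → ℝ) :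
    |torusAvgR f t s x| ≤ (2 * Real.pi) * (2 * Real.pi) := by
  have h2π : (0:ℝ) ≤ 2 * Real.pi := twopi_pos.le
  have hin : ∀ θ : ℝ, ‖∫ φ in (0:ℝ)..(2 * Real.pi),
      f (x - ![(t + s * Real.cos θ) * Real.cos φ, (t + s * Real.cos θ) * Real.sin φ,
        s * Real.sin θ])‖ ≤ 2 * Real.pi := by
    intro θ
    have := intervalIntegral.norm_integral_le_of_norm_le_const
      (C := 1) (a := (0:ℝ)) (b := 2 * Real.pi)
      (f := fun φ => f (x - ![(t + s * Real.cos θ) * Real.cos φ,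
        (t + s * Real.cos θ) * Real.sin φ, s * Real.sin θ])) (fun φ _ => hf _)
    rw [sub_zero, one_mul, abs_of_nonneg h2π] at this
    exact this
  have := intervalIntegral.norm_integral_le_of_norm_le_const
    (C := 2 * Real.pi) (a := (0:ℝ)) (b := 2 * Real.pi)
    (f := fun θ => ∫ φ in (0:ℝ)..(2 * Real.pi),
      f (x - ![(t + s * Real.cos θ) * Real.cos φ, (t + s * Real.cos θ) * Real.sin φ,
        s * Real.sin θ])) (fun θ _ => hin θ)
  rw [sub_zero, abs_of_nonneg h2π] at this
  exact this

lemma torusMax_nonneg (c0 : ℝ) (f : (Fin 3 → ℝ) → ℝ) (x : Fin 3 → ℝ) :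
    0 ≤ torusMax c0 f x :=
  Real.iSup_nonneg fun _ => Real.iSup_nonneg fun _ => Real.iSup_nonneg fun _ =>
    Real.iSup_nonneg fun _ => abs_nonneg _

lemma le_torusMax (c0 : ℝ) (f : (Fin 3 → ℝ) → ℝ) (hf : ∀ y, ‖f y‖ ≤ 1) {t s : ℝ}
    (x : Fin 3 → ℝ) (ht : t ∈ Set.Icc (1:ℝ) 2) (hs : s ∈ Set.Ioo 0 (c0 * t)) :
    |torusAvgR f t s x| ≤ torusMax c0 f x := by
  have hB0 : (0:ℝ) ≤ (2 * Real.pi) * (2 * Real.pi) := by positivity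
  have hB := fun t' s' => avg_abs_le f hf t' s' x
  have h1 : |torusAvgR f t s x| ≤ ⨆ s' ∈ Set.Ioo 0 (c0 * t), |torusAvgR f t s' x| := by
    have hbdd : BddAbove (Set.range fun s' =>
        ⨆ _ : s' ∈ Set.Ioo 0 (c0 * t), |torusAvgR f t s' x|) := by
      refine ⟨(2 * Real.pi) * (2 * Real.pi), ?_⟩
      rintro _ ⟨s', rfl⟩
      exact Real.iSup_le (fun _ => hB t s') hB0
    calc |torusAvgR f t s x|
        = ⨆ _ : s ∈ Set.Ioo 0 (c0 * t), |torusAvgR f t s x| :=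
          (ciSup_pos (f := fun _ : s ∈ Set.Ioo 0 (c0 * t) => |torusAvgR f t s x|) hs).symm
      _ ≤ ⨆ s' ∈ Set.Ioo 0 (c0 * t), |torusAvgR f t s' x| := le_ciSup hbdd s
  have hbdd2 : BddAbove (Set.range fun t' =>
      ⨆ _ : t' ∈ Set.Icc (1:ℝ) 2, ⨆ s' ∈ Set.Ioo 0 (c0 * t'), |torusAvgR f t' s' x|) := by
    refine ⟨(2 * Real.pi) * (2 * Real.pi), ?_⟩
    rintro _ ⟨t', rfl⟩
    exact Real.iSup_le (fun _ => Real.iSup_le (fun s' =>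
      Real.iSup_le (fun _ => hB t' s') hB0) hB0) hB0
  calc |torusAvgR f t s x|
      ≤ ⨆ s' ∈ Set.Ioo 0 (c0 * t), |torusAvgR f t s' x| := h1
    _ = ⨆ _ : t ∈ Set.Icc (1:ℝ) 2, ⨆ s' ∈ Set.Ioo 0 (c0 * t), |torusAvgR f t s' x| :=
        (ciSup_pos (f := fun _ : t ∈ Set.Icc (1:ℝ) 2 =>
          ⨆ s' ∈ Set.Ioo 0 (c0 * t), |torusAvgR f t s' x|) ht).symm
    _ ≤ torusMax c0 f x := le_ciSup hbdd2 t

def slabSet (c0 r : ℝ) : Set (Fin 3 → ℝ) :=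
  Set.univ.pi fun i => ![Set.Icc (1:ℝ) 2, Set.Icc (-(r/4)) (r/4), Set.Icc (c0/4) (c0/2)] i

lemma slabSet_measurable (c0 r : ℝ) : MeasurableSet (slabSet c0 r) := by
  apply MeasurableSet.univ_pi
  intro i; fin_cases i <;> exact measurableSet_Icc

lemma boxSet_volume {r : ℝ} (hr : 0 < r) :
    volume (boxSet r) = ENNReal.ofReal (8 * r^7) := by
  rw [boxSet, volume_pi_pi, Fin.prod_univ_three]
  simp only [Matrix.cons_val_zero, Matrix.cons_val_one, Matrix.head_cons,
    Matrix.cons_val_two, Matrix.tail_cons, Real.volume_Ioo]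
  rw [show r^2 - -r^2 = 2*r^2 from by ring, show r - -r = 2*r from by ring,
    show r^4 - -r^4 = 2*r^4 from by ring,
    ← ENNReal.ofReal_mul (by positivity), ← ENNReal.ofReal_mul (by positivity)]
  congr 1
  ring

lemma slabSet_volume {c0 r : ℝ} (h0 : 0 < c0) (hr : 0 < r) :
    volume (slabSet c0 r) = ENNReal.ofReal (c0 * r / 8) := by
  rw [slabSet, volume_pi_pi, Fin.prod_univ_three]
  simp only [Matrix.cons_val_zero, Matrix.cons_val_one, Matrix.head_cons,
    Matrix.cons_val_two, Matrix.tail_cons, Real.volume_Icc]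
  rw [show (2:ℝ) - 1 = 1 from by ring, show r/4 - -(r/4) = r/2 from by ring,
    show c0/2 - c0/4 = c0/4 from by ring,
    ← ENNReal.ofReal_mul (by positivity), ← ENNReal.ofReal_mul (by positivity)]
  congr 1
  ring

lemma torusMax_lower {c0 r : ℝ} (h0 : 0 < c0) (h1 : c0 < 1) (hr : 0 < r) (hr1 : r < 1)
    {x : Fin 3 → ℝ} (hx : x ∈ slabSet c0 r) :
    r^3/64 ≤ torusMax c0 (boxInd r) x := by
  rw [slabSet, Set.mem_univ_pi] at hx
  have hx0 := hx 0
  have hx1 := hx 1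
  have hx2 := hx 2
  simp only [Matrix.cons_val_zero, Matrix.cons_val_one, Matrix.head_cons,
    Matrix.cons_val_two, Matrix.tail_cons] at hx0 hx1 hx2
  have ht : x 0 ∈ Set.Icc (1:ℝ) 2 := hx0
  have hs : x 2 ∈ Set.Ioo 0 (c0 * x 0) := by
    constructor
    · have := hx2.1; linarith
    · have h2 := hx2.2
      have h3 : c0 ≤ c0 * x 0 := by nlinarith [ht.1]
      linarith
  have hgeom : ∀ {θ φ : ℝ}, θ ∈ Set.Icc (Real.pi/2) (Real.pi/2 + r^2/8) →
      φ ∈ Set.Icc (r/8) (r/4) →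
      x - ![(x 0 + x 2 * Real.cos θ) * Real.cos φ, (x 0 + x 2 * Real.cos θ) * Real.sin φ,
        x 2 * Real.sin θ] ∈ boxSet r :=
    fun hθ hφ => geom_mem h0 h1 hr hr1 x hx0 hx1 hx2 hθ hφ
  calc r^3/64 ≤ torusAvgR (boxInd r) (x 0) (x 2) x :=
        avg_lower h0 h1 hr hr1 x hx0 hx1 hx2 hgeom
    _ ≤ |torusAvgR (boxInd r) (x 0) (x 2) x| := le_abs_self _
    _ ≤ torusMax c0 (boxInd r) x := le_torusMax c0 (boxInd r) (boxInd_abs_le_one r) x ht hs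


/-- Necessary condition: if the local two-parameter maximal operator over tori is bounded
from `L^p` to `L^q` on characteristic functions, then `3 + 1/q ≥ 7/p`. -/
theorem torus_maximal_necessary_condition_b (c0 : ℝ) (h0 : 0 < c0) (h1 : c0 < 1)
    (p q : ℝ≥0∞) (hp : 1 ≤ p) (hpq : p ≤ q) (C : ℝ)
    (hC : ∀ E : Set (Fin 3 → ℝ), MeasurableSet E →
      eLpNorm (torusMax c0 (E.indicator fun _ => (1:ℝ))) q volume ≤
        ENNReal.ofReal C * eLpNorm (E.indicator fun _ => (1:ℝ)) p volume) :
    7 / p.toReal ≤ 3 + 1 / q.toReal := by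
  have hqt0 : 0 ≤ 1 / q.toReal := by positivity
  by_cases hptop : p = ∞
  · rw [hptop]
    simp only [ENNReal.toReal_top, div_zero]
    linarith
  have hp0 : p ≠ 0 := by
    intro h; rw [h] at hp; exact absurd hp (by simp)
  have hq0 : q ≠ 0 := by
    intro h; rw [h] at hpq; simp at hpq; exact hp0 hpq
  have hpt1 : 1 ≤ p.toReal := by
    have := ENNReal.toReal_mono hptop hp
    simpa using this
  have hptpos : 0 < p.toReal := by linarith
  -- key scale inequality
  have key : ∀ r : ℝ, 0 < r → r < 1 →
      (r^3/64) * (c0*r/8)^(1/q.toReal) ≤ (max C 0) * (8*r^7)^(1/p.toReal) := by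
    intro r hr hr1
    have hCb := hC (boxSet r) (boxSet_measurable r)
    have hmono : eLpNorm ((slabSet c0 r).indicator fun _ => r^3/64) q volume ≤
        eLpNorm (torusMax c0 ((boxSet r).indicator fun _ => (1:ℝ))) q volume := by
      apply eLpNorm_mono
      intro x
      by_cases hx : x ∈ slabSet c0 r
      · rw [Set.indicator_of_mem hx]
        have h := torusMax_lower h0 h1 hr hr1 hx
        rw [Real.norm_eq_abs, Real.norm_eq_abs, abs_of_nonneg (by positivity)]
        exact h.trans (le_abs_self _)
      · rw [Set.indicator_of_notMem hx]
        simp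
    have hslab_vol := slabSet_volume (r := r) h0 hr
    have hslab_ne : volume (slabSet c0 r) ≠ 0 := by
      rw [hslab_vol]
      simp only [ne_eq, ENNReal.ofReal_eq_zero, not_le]
      positivity
    have hLhs : eLpNorm ((slabSet c0 r).indicator fun _ => r^3/64) q volume =
        ENNReal.ofReal (r^3/64) * (ENNReal.ofReal (c0*r/8))^(1/q.toReal) := by
      rw [eLpNorm_indicator_const' (slabSet_measurable c0 r) hslab_ne hq0, hslab_vol,
        Real.enorm_eq_ofReal (by positivity)]
    have hRhs : eLpNorm ((boxSet r).indicator fun _ => (1:ℝ)) p volume =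
        (ENNReal.ofReal (8*r^7))^(1/p.toReal) := by
      rw [eLpNorm_indicator_const (boxSet_measurable r) hp0 hptop, boxSet_volume hr]
      simp
    have hchain : ENNReal.ofReal (r^3/64) * (ENNReal.ofReal (c0*r/8))^(1/q.toReal) ≤
        ENNReal.ofReal (max C 0) * (ENNReal.ofReal (8*r^7))^(1/p.toReal) := by
      calc ENNReal.ofReal (r^3/64) * (ENNReal.ofReal (c0*r/8))^(1/q.toReal)
          = eLpNorm ((slabSet c0 r).indicator fun _ => r^3/64) q volume := hLhs.symm
        _ ≤ eLpNorm (torusMax c0 ((boxSet r).indicator fun _ => (1:ℝ))) q volume := hmono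
        _ ≤ ENNReal.ofReal C * eLpNorm ((boxSet r).indicator fun _ => (1:ℝ)) p volume := hCb
        _ ≤ ENNReal.ofReal (max C 0) * (ENNReal.ofReal (8*r^7))^(1/p.toReal) := by
            rw [hRhs]
            exact mul_le_mul_left (ENNReal.ofReal_le_ofReal (le_max_left C 0)) _
    rw [ENNReal.ofReal_rpow_of_pos (by positivity), ENNReal.ofReal_rpow_of_pos (by positivity),
      ← ENNReal.ofReal_mul (by positivity), ← ENNReal.ofReal_mul (le_max_right C 0)] at hchain
    rwa [ENNReal.ofReal_le_ofReal_iff (by positivity)] at hchain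
  -- final limiting argument
  by_contra hcon
  push_neg at hcon
  have ha : (0:ℝ) ≤ 1/q.toReal := hqt0
  have hb : 0 < 1/p.toReal := by positivity
  set a := 1/q.toReal with ha_def
  set b := 1/p.toReal with hb_def
  have h7b : 7/p.toReal = 7*b := by rw [hb_def]; ring
  have hδ : 0 < 7*b - (3+a) := by
    rw [h7b] at hcon; linarith
  set δ := 7*b - (3+a) with hδ_def
  set K₁ := (c0/8)^a/64 with hK₁_def
  have hK₁ : 0 < K₁ := by
    rw [hK₁_def]; positivity
  set K₂ := (max C 0) * 8^b + 1 with hK₂_def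
  have hK₂ : 0 < K₂ := by
    rw [hK₂_def]
    have : 0 ≤ (max C 0) * 8^b := by positivity
    linarith
  -- rewrite key in power form
  have key2 : ∀ r : ℝ, 0 < r → r < 1 → K₁ * r^(3+a) ≤ K₂ * r^(7*b) := by
    intro r hr hr1
    have h := key r hr hr1
    have e1 : (c0*r/8)^a = (c0/8)^a * r^a := by
      rw [show c0*r/8 = (c0/8)*r from by ring, Real.mul_rpow (by positivity) hr.le]
    have e2 : (8*r^7)^b = 8^b * r^(7*b) := by
      rw [Real.mul_rpow (by norm_num) (by positivity), ← Real.rpow_natCast r 7,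
        ← Real.rpow_mul hr.le]
      norm_num
    have e3 : r^3 * r^a = r^(3+a) := by
      rw [← Real.rpow_natCast r 3, ← Real.rpow_add hr]
      norm_num
    have h2 : K₁ * r^(3+a) ≤ (max C 0) * 8^b * r^(7*b) := by
      rw [hK₁_def, ← e3]
      calc (c0/8)^a/64 * (r^3 * r^a) = (r^3/64) * ((c0/8)^a * r^a) := by ring
        _ = (r^3/64) * (c0*r/8)^a := by rw [e1]
        _ ≤ (max C 0) * (8*r^7)^b := h
        _ = (max C 0) * 8^b * r^(7*b) := by rw [e2]; ring
    have h3 : (max C 0) * 8^b * r^(7*b) ≤ K₂ * r^(7*b) := by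
      have hrp : 0 ≤ r^(7*b) := Real.rpow_nonneg hr.le _
      rw [hK₂_def]
      nlinarith
    linarith
  -- pick small r
  set r := min (1/2) ((K₁/(2*K₂))^(1/δ)) with hr_def
  have hrK : 0 < (K₁/(2*K₂))^(1/δ) := Real.rpow_pos_of_pos (by positivity) _
  have hr0 : 0 < r := lt_min (by norm_num) hrK
  have hr1 : r < 1 := lt_of_le_of_lt (min_le_left _ _) (by norm_num)
  have h := key2 r hr0 hr1
  have hsplit : r^(7*b) = r^(3+a) * r^δ := by
    rw [← Real.rpow_add hr0]
    congr 1
    rw [hδ_def]; ring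
  rw [hsplit] at h
  have hX : 0 < r^(3+a) := Real.rpow_pos_of_pos hr0 _
  have h4 : K₁ ≤ K₂ * r^δ := by
    have := (mul_le_mul_iff_of_pos_right hX).mp (by linarith [h] : K₁ * r^(3+a) ≤ (K₂ * r^δ) * r^(3+a))
    exact this
  have h5 : r^δ ≤ K₁/(2*K₂) := by
    have hle : r ≤ (K₁/(2*K₂))^(1/δ) := min_le_right _ _
    have := Real.rpow_le_rpow hr0.le hle hδ.le
    rwa [← Real.rpow_mul (by positivity), one_div_mul_cancel hδ.ne', Real.rpow_one] at this
  have h7 : K₂ * (K₁/(2*K₂)) = K₁/2 := by field_simp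
  have h8 := mul_le_mul_of_nonneg_left h5 hK₂.le
  clear_value a b δ K₁ K₂ r
  linarith
end

section
/- Let 0 < c0 < 1 and let M f(x) = sup_{0 < s < c0·t, 1 ≤ t ≤ 2} |f * σ_t^s(x)|. If for some 1 ≤ p ≤ q ≤ ∞ the estimate ‖M f‖_{L^q(ℝ³)} ≤ C·‖f‖_{L^p(ℝ³)} holds for all characteristic functions of measurable sets, then necessarily 3/q ≥ 1/p. (Test family: f̄_r = characteristic function of the r-neighborhood of the torus 𝕋₁^{c0}, which has measure ∼ r and satisfies M f̄_r(x) ≳ 1 for |x| ≲ r.) -/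
open MeasureTheory
open scoped ENNReal

namespace TorusNec

noncomputable def Tpt (t s θ φ : ℝ) : Fin 3 → ℝ :=
  ![(t + s * Real.cos θ) * Real.cos φ, (t + s * Real.cos θ) * Real.sin φ, s * Real.sin θ]

lemma avg_eq_Tpt (f : (Fin 3 → ℝ) → ℝ) (t s : ℝ) (x : Fin 3 → ℝ) :
    torusAvgR f t s x
      = ∫ θ in (0:ℝ)..(2 * Real.pi), ∫ φ in (0:ℝ)..(2 * Real.pi), f (x - Tpt t s θ φ) := rfl

def Eset (r : ℝ) : Set (Fin 3 → ℝ) := ⋃ (θ : ℝ) (φ : ℝ), Metric.ball (Tpt 1 r θ φ) r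

lemma Tpt_neg (t s θ φ : ℝ) : Tpt t s (-θ) (φ + Real.pi) = -(Tpt t s θ φ) := by
  funext i
  fin_cases i <;>
    simp [Tpt, Real.cos_add, Real.sin_add, Real.cos_neg, Real.sin_neg] <;> ring

lemma mem_Eset {r : ℝ} {x : Fin 3 → ℝ} (hx : ‖x‖ < r) (θ φ : ℝ) :
    x - Tpt 1 r θ φ ∈ Eset r := by
  refine Set.mem_iUnion.2 ⟨-θ, Set.mem_iUnion.2 ⟨φ + Real.pi, ?_⟩⟩
  rw [Metric.mem_ball, Tpt_neg, dist_eq_norm]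
  simpa using hx

lemma abs_avg_le (f : (Fin 3 → ℝ) → ℝ) (hf : ∀ y, ‖f y‖ ≤ 1) (t s : ℝ) (x : Fin 3 → ℝ) :
    |torusAvgR f t s x| ≤ 2 * Real.pi * (2 * Real.pi) := by
  have hπ : (0:ℝ) ≤ 2 * Real.pi := by positivity
  have inner : ∀ θ : ℝ,
      ‖∫ φ in (0:ℝ)..(2 * Real.pi), f (x - Tpt t s θ φ)‖ ≤ 2 * Real.pi := by
    intro θ
    have := intervalIntegral.norm_integral_le_of_norm_le_const
      (a := (0:ℝ)) (b := 2 * Real.pi) (C := 1)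
      (f := fun φ => f (x - Tpt t s θ φ)) (fun y _ => hf _)
    simpa [abs_of_nonneg hπ] using this
  have outer := intervalIntegral.norm_integral_le_of_norm_le_const
    (a := (0:ℝ)) (b := 2 * Real.pi) (C := 2 * Real.pi)
    (f := fun θ => ∫ φ in (0:ℝ)..(2 * Real.pi), f (x - Tpt t s θ φ))
    (fun θ _ => inner θ)
  rw [avg_eq_Tpt]
  simpa [Real.norm_eq_abs, abs_of_nonneg hπ] using outer

lemma avg_const_one {r : ℝ} {x : Fin 3 → ℝ} (hx : ‖x‖ < r) :
    torusAvgR ((Eset r).indicator fun _ => (1:ℝ)) 1 r x = 2 * Real.pi * (2 * Real.pi) := by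
  have key : ∀ θ φ : ℝ,
      (Eset r).indicator (fun _ => (1:ℝ)) (x - Tpt 1 r θ φ) = 1 := fun θ φ =>
    Set.indicator_of_mem (mem_Eset hx θ φ) _
  rw [avg_eq_Tpt]
  simp only [key, intervalIntegral.integral_const, smul_eq_mul, mul_one]
  ring

variable {c0 : ℝ} (f : (Fin 3 → ℝ) → ℝ)

lemma G_le (hf : ∀ y, ‖f y‖ ≤ 1) (x : Fin 3 → ℝ) (t s : ℝ) :
    (⨆ _ : s ∈ Set.Ioo 0 (c0 * t), |torusAvgR f t s x|) ≤ 2 * Real.pi * (2 * Real.pi) := by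
  by_cases h : s ∈ Set.Ioo 0 (c0 * t)
  · rw [ciSup_pos h]; exact abs_avg_le f hf t s x
  · haveI : IsEmpty (s ∈ Set.Ioo 0 (c0 * t) : Prop) := ⟨h⟩
    rw [Real.iSup_of_isEmpty]
    positivity

lemma F_le (hf : ∀ y, ‖f y‖ ≤ 1) (x : Fin 3 → ℝ) (t : ℝ) :
    (⨆ _ : t ∈ Set.Icc (1:ℝ) 2, ⨆ s, ⨆ _ : s ∈ Set.Ioo 0 (c0 * t), |torusAvgR f t s x|)
      ≤ 2 * Real.pi * (2 * Real.pi) := by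
  by_cases h : t ∈ Set.Icc (1:ℝ) 2
  · rw [ciSup_pos h]
    exact ciSup_le fun s => G_le f hf x t s
  · haveI : IsEmpty (t ∈ Set.Icc (1:ℝ) 2 : Prop) := ⟨h⟩
    rw [Real.iSup_of_isEmpty]
    positivity

lemma bddF (hf : ∀ y, ‖f y‖ ≤ 1) (x : Fin 3 → ℝ) :
    BddAbove (Set.range fun t =>
      ⨆ _ : t ∈ Set.Icc (1:ℝ) 2, ⨆ s, ⨆ _ : s ∈ Set.Ioo 0 (c0 * t), |torusAvgR f t s x|) :=
  ⟨2 * Real.pi * (2 * Real.pi), by rintro y ⟨t, rfl⟩; exact F_le f hf x t⟩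

lemma torusMax_nonneg (hf : ∀ y, ‖f y‖ ≤ 1) (x : Fin 3 → ℝ) : 0 ≤ torusMax c0 f x := by
  refine le_ciSup_of_le (bddF f hf x) 0 ?_
  haveI : IsEmpty ((0:ℝ) ∈ Set.Icc (1:ℝ) 2 : Prop) := ⟨by norm_num⟩
  rw [Real.iSup_of_isEmpty]

lemma le_torusMax (hf : ∀ y, ‖f y‖ ≤ 1) {r : ℝ} (hr : 0 < r) (hrc : r < c0) (x : Fin 3 → ℝ) :
    |torusAvgR f 1 r x| ≤ torusMax c0 f x := by
  have hmem : r ∈ Set.Ioo 0 (c0 * 1) := ⟨hr, by rw [mul_one]; exact hrc⟩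
  have h1 : |torusAvgR f 1 r x|
      ≤ ⨆ s, ⨆ _ : s ∈ Set.Ioo 0 (c0 * 1), |torusAvgR f 1 s x| := by
    have hb : BddAbove (Set.range fun s =>
        ⨆ _ : s ∈ Set.Ioo 0 (c0 * 1), |torusAvgR f 1 s x|) :=
      ⟨2 * Real.pi * (2 * Real.pi), by rintro y ⟨s, rfl⟩; exact G_le f hf x 1 s⟩
    have := le_ciSup hb r
    rwa [ciSup_pos hmem] at this
  refine le_trans h1 ?_
  have h3 := le_ciSup (bddF (c0 := c0) f hf x) 1
  rwa [ciSup_pos (show (1:ℝ) ∈ Set.Icc (1:ℝ) 2 by norm_num)] at h3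

def Box (r : ℝ) : Set (Fin 3 → ℝ) :=
  Set.univ.pi ![Set.Icc (-2:ℝ) 2, Set.Icc (-2:ℝ) 2, Set.Icc (-(2*r)) (2*r)]

lemma Eset_measurable (r : ℝ) : MeasurableSet (Eset r) :=
  (isOpen_iUnion fun _ => isOpen_iUnion fun _ => Metric.isOpen_ball).measurableSet

lemma Box_measurable (r : ℝ) : MeasurableSet (Box r) := by
  apply MeasurableSet.univ_pi
  intro i
  fin_cases i <;> exact measurableSet_Icc

lemma Eset_subset_Box {r : ℝ} (hr : 0 < r) (hr2 : r ≤ 1/2) : Eset r ⊆ Box r := by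
  intro y hy
  rcases Set.mem_iUnion.1 hy with ⟨θ, hy⟩
  rcases Set.mem_iUnion.1 hy with ⟨φ, hy⟩
  rw [Metric.mem_ball] at hy
  have hd : ∀ i, |y i - Tpt 1 r θ φ i| < r := fun i => by
    have h := dist_le_pi_dist y (Tpt 1 r θ φ) i
    rw [Real.dist_eq] at h
    exact lt_of_le_of_lt h hy
  have hcθ₁ := Real.neg_one_le_cos θ
  have hcθ₂ := Real.cos_le_one θ
  have hcφ := Real.abs_cos_le_one φ
  have hsφ := Real.abs_sin_le_one φ
  have hsθ := Real.abs_sin_le_one θ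
  have hA : |1 + r * Real.cos θ| ≤ 1 + r := by
    rw [abs_le]; constructor <;> nlinarith
  intro i _
  fin_cases i
  · have h0 := hd 0
    have hT : |Tpt 1 r θ φ 0| ≤ 1 + r := by
      show |(1 + r * Real.cos θ) * Real.cos φ| ≤ 1 + r
      rw [abs_mul]
      calc |1 + r * Real.cos θ| * |Real.cos φ| ≤ (1 + r) * 1 :=
            mul_le_mul hA hcφ (abs_nonneg _) (by linarith)
        _ = 1 + r := by ring
    rw [abs_lt] at h0
    rw [abs_le] at hT
    show y 0 ∈ Set.Icc (-2:ℝ) 2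
    rw [Set.mem_Icc]
    constructor <;> linarith
  · have h0 := hd 1
    have hT : |Tpt 1 r θ φ 1| ≤ 1 + r := by
      show |(1 + r * Real.cos θ) * Real.sin φ| ≤ 1 + r
      rw [abs_mul]
      calc |1 + r * Real.cos θ| * |Real.sin φ| ≤ (1 + r) * 1 :=
            mul_le_mul hA hsφ (abs_nonneg _) (by linarith)
        _ = 1 + r := by ring
    rw [abs_lt] at h0
    rw [abs_le] at hT
    show y 1 ∈ Set.Icc (-2:ℝ) 2
    rw [Set.mem_Icc]
    constructor <;> linarith
  · have h0 := hd 2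
    have hT : |Tpt 1 r θ φ 2| ≤ r := by
      show |r * Real.sin θ| ≤ r
      rw [abs_mul, abs_of_pos hr]
      nlinarith [abs_nonneg (Real.sin θ)]
    rw [abs_lt] at h0
    rw [abs_le] at hT
    show y 2 ∈ Set.Icc (-(2*r)) (2*r)
    rw [Set.mem_Icc]
    constructor <;> linarith

lemma vol_Box {r : ℝ} (hr : 0 ≤ r) : volume (Box r) = ENNReal.ofReal (64 * r) := by
  rw [Box, volume_pi_pi, Fin.prod_univ_three]
  simp only [Matrix.cons_val_zero, Matrix.cons_val_one, Matrix.head_cons, Matrix.cons_val_two,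
    Matrix.tail_cons, Real.volume_Icc]
  rw [← ENNReal.ofReal_mul (by norm_num), ← ENNReal.ofReal_mul (by positivity)]
  congr 1
  ring

end TorusNec

/-- Necessary condition: if the local two-parameter maximal operator over tori is bounded
from `L^p` to `L^q` on characteristic functions, then `3/q ≥ 1/p`. -/
theorem torus_maximal_necessary_condition_d (c0 : ℝ) (h0 : 0 < c0) (h1 : c0 < 1)
    (p q : ℝ≥0∞) (hp : 1 ≤ p) (hpq : p ≤ q) (C : ℝ)
    (hC : ∀ E : Set (Fin 3 → ℝ), MeasurableSet E →
      eLpNorm (torusMax c0 (E.indicator fun _ => (1:ℝ))) q volume ≤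
        ENNReal.ofReal C * eLpNorm (E.indicator fun _ => (1:ℝ)) p volume) :
    1 / p.toReal ≤ 3 / q.toReal := by
  by_contra hcon
  push_neg at hcon
  have hb0 : (0:ℝ) ≤ 3 / q.toReal := by positivity
  have ha0 : (0:ℝ) < 1 / p.toReal := lt_of_le_of_lt hb0 hcon
  have hp0 : p ≠ 0 := fun h => by simp [h] at hp
  have hpt0 : p.toReal ≠ 0 := by
    intro h
    rw [h] at ha0
    simp at ha0
  have hptop : p ≠ ∞ := fun h => hpt0 (by simp [h])
  have hq0 : q ≠ 0 := by
    intro h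
    rw [h, le_zero_iff] at hpq
    exact hp0 hpq
  set a : ℝ := 1 / p.toReal with ha
  set b : ℝ := 3 / q.toReal with hb
  have hπ : (0:ℝ) < 2 * Real.pi * (2 * Real.pi) := by positivity
  set K : ℝ := 2 * Real.pi * (2 * Real.pi) with hKdef
  -- main estimate for the test family
  have main : ∀ r : ℝ, 0 < r → r < c0 → r ≤ 1/2 →
      ENNReal.ofReal K * ENNReal.ofReal ((2*r)^3) ^ (1/q.toReal)
        ≤ ENNReal.ofReal C * ENNReal.ofReal (64*r) ^ (1/p.toReal) := by
    intro r hr hrc hr2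
    set f := (TorusNec.Eset r).indicator (fun _ => (1:ℝ)) with hf_def
    have hf : ∀ y, ‖f y‖ ≤ 1 := by
      classical
      intro y
      rw [hf_def, Set.indicator_apply]
      split_ifs <;> simp
    -- lower bound for the maximal function
    have hlow0 : ∀ x : Fin 3 → ℝ,
        ‖(Metric.ball (0 : Fin 3 → ℝ) r).indicator (fun _ => K) x‖ ≤ ‖torusMax c0 f x‖ := by
      intro x
      by_cases hx : x ∈ Metric.ball (0 : Fin 3 → ℝ) r
      · rw [Set.indicator_of_mem hx]
        have h1 := TorusNec.le_torusMax f hf hr hrc x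
        rw [hf_def, TorusNec.avg_const_one (mem_ball_zero_iff.1 hx)] at h1
        have h2 : K ≤ torusMax c0 f x := le_trans (le_abs_self K) h1
        calc ‖K‖ = K := by rw [Real.norm_eq_abs, abs_of_pos hπ]
          _ ≤ torusMax c0 f x := h2
          _ ≤ |torusMax c0 f x| := le_abs_self _
          _ = ‖torusMax c0 f x‖ := (Real.norm_eq_abs _).symm
      · rw [Set.indicator_of_notMem hx]
        simp
    have hlow := eLpNorm_mono (p := q) (μ := volume) hlow0
    have hballvol : volume (Metric.ball (0 : Fin 3 → ℝ) r) = ENNReal.ofReal ((2*r)^3) := by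
      rw [Real.volume_pi_ball _ hr]
      simp
    have hballne : volume (Metric.ball (0 : Fin 3 → ℝ) r) ≠ 0 := by
      rw [hballvol]
      simp only [ne_eq, ENNReal.ofReal_eq_zero, not_le]
      positivity
    rw [eLpNorm_indicator_const' measurableSet_ball hballne hq0, hballvol,
      Real.enorm_eq_ofReal hπ.le] at hlow
    -- upper bound via the box
    have hup0 : ∀ x, ‖f x‖ ≤ ‖(TorusNec.Box r).indicator (fun _ => (1:ℝ)) x‖ := by
      intro x
      by_cases hx : x ∈ TorusNec.Eset r
      · rw [hf_def, Set.indicator_of_mem hx,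
          Set.indicator_of_mem (TorusNec.Eset_subset_Box hr hr2 hx)]
      · rw [hf_def, Set.indicator_of_notMem hx]
        simp
    have hup := eLpNorm_mono (p := p) (μ := volume) hup0
    rw [eLpNorm_indicator_const (TorusNec.Box_measurable r) hp0 hptop,
      TorusNec.vol_Box hr.le] at hup
    have hCE := hC (TorusNec.Eset r) (TorusNec.Eset_measurable r)
    calc ENNReal.ofReal K * ENNReal.ofReal ((2*r)^3) ^ (1/q.toReal)
        ≤ eLpNorm (torusMax c0 f) q volume := hlow
      _ ≤ ENNReal.ofReal C * eLpNorm f p volume := hCE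
      _ ≤ ENNReal.ofReal C * (‖(1:ℝ)‖₊ * ENNReal.ofReal (64*r) ^ (1/p.toReal)) :=
          mul_le_mul_right hup _
      _ = ENNReal.ofReal C * ENNReal.ofReal (64*r) ^ (1/p.toReal) := by
          norm_num
  -- convert to a real inequality
  have hCto : (ENNReal.ofReal C).toReal = max C 0 := by
    rcases le_total C 0 with h | h
    · rw [ENNReal.ofReal_eq_zero.2 h]
      simp [max_eq_right h]
    · rw [ENNReal.toReal_ofReal h, max_eq_left h]
  have main' : ∀ r : ℝ, 0 < r → r < min c0 (1/2) →
      K * 2^b * r^b ≤ (max C 0) * 64^a * r^a := by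
    intro r hr hrm
    have h := main r hr (lt_of_lt_of_le hrm (min_le_left _ _))
      (le_of_lt (lt_of_lt_of_le hrm (min_le_right _ _)))
    have hRfin : ENNReal.ofReal C * ENNReal.ofReal (64*r) ^ (1/p.toReal) ≠ ∞ :=
      ENNReal.mul_ne_top ENNReal.ofReal_ne_top
        (ENNReal.rpow_ne_top_of_nonneg ha0.le ENNReal.ofReal_ne_top)
    have h2 := ENNReal.toReal_mono hRfin h
    rw [ENNReal.toReal_mul, ENNReal.toReal_mul, ← ENNReal.toReal_rpow, ← ENNReal.toReal_rpow,
      hCto, ENNReal.toReal_ofReal hπ.le,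
      ENNReal.toReal_ofReal (show (0:ℝ) ≤ (2*r)^3 by positivity),
      ENNReal.toReal_ofReal (show (0:ℝ) ≤ 64*r by positivity)] at h2
    have e1 : ((2*r)^3 : ℝ) ^ (1/q.toReal) = 2^b * r^b := by
      rw [show ((2*r)^3 : ℝ) = (2*r)^((3:ℕ):ℝ) by rw [Real.rpow_natCast],
        ← Real.rpow_mul (by positivity)]
      rw [show ((3:ℕ):ℝ) * (1/q.toReal) = b by rw [hb]; push_cast; ring]
      rw [Real.mul_rpow (by norm_num) hr.le]
    have e2 : ((64*r) : ℝ) ^ (1/p.toReal) = 64^a * r^a := by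
      rw [← ha, Real.mul_rpow (by norm_num) hr.le]
    rw [e1, e2] at h2
    calc K * 2^b * r^b = K * (2^b * r^b) := by ring
      _ ≤ max C 0 * (64^a * r^a) := h2
      _ = max C 0 * 64^a * r^a := by ring
  -- the contradiction as r → 0
  set K1 : ℝ := K * 2^b with hK1def
  set K2 : ℝ := max C 0 * 64^a with hK2def
  have hK1 : 0 < K1 := mul_pos hπ (Real.rpow_pos_of_pos two_pos b)
  have hK2 : 0 ≤ K2 :=
    mul_nonneg (le_max_right _ _) (Real.rpow_pos_of_pos (by norm_num) a).le
  have hρ : 0 < min c0 (1/2) := lt_min h0 (by norm_num)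
  have claim : ∀ r : ℝ, 0 < r → r < min c0 (1/2) → K1 ≤ K2 * r^(a-b) := by
    intro r hr hrm
    have h := main' r hr hrm
    have hrb : (0:ℝ) < r^b := Real.rpow_pos_of_pos hr b
    have hsplit : r^a = r^(a-b) * r^b := by
      rw [← Real.rpow_add hr]
      ring_nf
    rw [hsplit] at h
    refine le_of_mul_le_mul_right ?_ hrb
    calc K1 * r^b ≤ max C 0 * 64^a * (r^(a-b) * r^b) := h
      _ = K2 * r^(a-b) * r^b := by rw [hK2def]; ring
  have hab : 0 < a - b := sub_pos.2 hcon
  have hK2pos : 0 < K2 := by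
    by_contra hneg
    push_neg at hneg
    have h := claim (min c0 (1/2) / 2) (by positivity) (half_lt_self hρ)
    nlinarith [Real.rpow_pos_of_pos (show (0:ℝ) < min c0 (1/2)/2 by positivity) (a-b)]
  set r₁ : ℝ := min (min c0 (1/2) / 2) ((K1/(2*K2)) ^ (a-b)⁻¹) with hr₁def
  have hr₁pos : 0 < r₁ := lt_min (by positivity) (Real.rpow_pos_of_pos (by positivity) _)
  have hr₁lt : r₁ < min c0 (1/2) := lt_of_le_of_lt (min_le_left _ _) (half_lt_self hρ)
  have h := claim r₁ hr₁pos hr₁lt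
  have hrpow : r₁ ^ (a-b) ≤ K1/(2*K2) := by
    calc r₁ ^ (a-b) ≤ ((K1/(2*K2)) ^ (a-b)⁻¹) ^ (a-b) :=
          Real.rpow_le_rpow hr₁pos.le (min_le_right _ _) hab.le
      _ = K1/(2*K2) := Real.rpow_inv_rpow (by positivity) (ne_of_gt hab)
  have h5 : K2 * r₁^(a-b) ≤ K2 * (K1/(2*K2)) := mul_le_mul_of_nonneg_left hrpow hK2pos.le
  have heq : K2 * (K1/(2*K2)) = K1/2 := by
    field_simp
  linarith
end
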